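/- arXiv:math/0003208 — 9 statements merged into one kernel-verified Lean document; each statement's English description precedes it below -/
import Mathlib

section
/- If h_ss is a C⁴ X-periodic positive solution of h_ss''' + r(h_ss) h_ss' = 0, then the second variation of the energy in the direction u = h_ss'' satisfies ∫₀^X [(h_ss''')² − r(h_ss)(h_ss'')²] dx = −(1/3) ∫₀^X r''(h_ss)(h_ss')⁴ dx. -/
open Set intervalIntegral

lemma periodic_deriv' {f : ℝ → ℝ} {c : ℝ} (hf : Function.Periodic f c) :
    Function.Periodic (deriv f) c := by
  intro x
  have : (fun y => f (y + c)) = f := funext fun y => hf y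
  calc deriv f (x + c) = deriv (fun y => f (y + c)) x := (deriv_comp_add_const f c x).symm
    _ = deriv f x := by rw [this]

/-- Second-variation identity in the direction u = h_ss''. -/
theorem second_variation_identity_hss''
    (X : ℝ) (hX : 0 < X)
    (r hss : ℝ → ℝ)
    (hr : ContDiffOn ℝ 2 r (Set.Ioi 0))
    (hss_smooth : ContDiff ℝ 6 hss)
    (hss_per : Function.Periodic hss X)
    (hss_pos : ∀ x, 0 < hss x)
    (hss_ode : ∀ x, deriv (deriv (deriv hss)) x + r (hss x) * deriv hss x = 0) :
    ∫ x in (0:ℝ)..X,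
        ((deriv (deriv (deriv hss)) x) ^ 2 - r (hss x) * (deriv (deriv hss) x) ^ 2)
      = -(1/3) * ∫ x in (0:ℝ)..X, deriv (deriv r) (hss x) * (deriv hss x) ^ 4 := by
  -- abbreviations
  set h1 : ℝ → ℝ := deriv hss with hh1
  set h2 : ℝ → ℝ := deriv h1 with hh2
  set h3 : ℝ → ℝ := deriv h2 with hh3
  -- smoothness of derivatives of hss
  have s1 : ContDiff ℝ 5 h1 := by
    have := ContDiff.iterate_deriv' 5 1 (by exact_mod_cast hss_smooth)
    simpa [hh1] using this
  have s2 : ContDiff ℝ 4 h2 := by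
    have := ContDiff.iterate_deriv' 4 1 (by exact_mod_cast s1)
    simpa [hh2] using this
  have s3 : ContDiff ℝ 3 h3 := by
    have := ContDiff.iterate_deriv' 3 1 (by exact_mod_cast s2)
    simpa [hh3] using this
  -- derivatives of r
  have hr1 : ContDiffOn ℝ 1 (deriv r) (Set.Ioi 0) :=
    hr.deriv_of_isOpen isOpen_Ioi (by norm_num)
  have hrd : ∀ y : ℝ, 0 < y → HasDerivAt r (deriv r y) y := fun y hy =>
    (((hr.contDiffAt (isOpen_Ioi.mem_nhds hy)).differentiableAt (by norm_num))).hasDerivAt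
  have hrd2 : ∀ y : ℝ, 0 < y → HasDerivAt (deriv r) (deriv (deriv r) y) y := fun y hy =>
    (((hr1.contDiffAt (isOpen_Ioi.mem_nhds hy)).differentiableAt (by norm_num))).hasDerivAt
  -- continuity of composed functions
  have chss : Continuous hss := hss_smooth.continuous
  have ch1 : Continuous h1 := s1.continuous
  have ch2 : Continuous h2 := s2.continuous
  have ch3 : Continuous h3 := s3.continuous
  have crh : Continuous fun x => r (hss x) := by
    rw [continuous_iff_continuousAt]
    intro x
    exact ((hr.contDiffAt (isOpen_Ioi.mem_nhds (hss_pos x))).continuousAt).comp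
      chss.continuousAt
  have crh1 : Continuous fun x => deriv r (hss x) := by
    rw [continuous_iff_continuousAt]
    intro x
    exact ((hr1.contDiffAt (isOpen_Ioi.mem_nhds (hss_pos x))).continuousAt).comp
      chss.continuousAt
  have crh2 : Continuous fun x => deriv (deriv r) (hss x) := by
    rw [continuous_iff_continuousAt]
    intro x
    have hco : ContinuousOn (deriv (deriv r)) (Set.Ioi 0) :=
      hr1.continuousOn_deriv_of_isOpen isOpen_Ioi le_rfl
    exact (hco.continuousAt (isOpen_Ioi.mem_nhds (hss_pos x))).comp chss.continuousAt
  -- pointwise derivatives of hss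
  have d_hss : ∀ x, HasDerivAt hss (h1 x) x := fun x =>
    (hss_smooth.differentiable (by norm_num) x).hasDerivAt
  have d_h1 : ∀ x, HasDerivAt h1 (h2 x) x := fun x =>
    (s1.differentiable (by norm_num) x).hasDerivAt
  have d_h2 : ∀ x, HasDerivAt h2 (h3 x) x := fun x =>
    (s2.differentiable (by norm_num) x).hasDerivAt
  -- the antiderivative F and the combined integrand I
  set I : ℝ → ℝ := fun x =>
    (h3 x) ^ 2 - r (hss x) * (h2 x) ^ 2 + (1/3) * deriv (deriv r) (hss x) * (h1 x) ^ 4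
    with hI
  set F : ℝ → ℝ := fun x =>
    (1/3) * (deriv r (hss x) * (h1 x) ^ 3) - r (hss x) * (h1 x * h2 x) with hF
  have dF : ∀ x, HasDerivAt F (I x) x := by
    intro x
    have A : HasDerivAt (fun y => r (hss y)) (deriv r (hss x) * h1 x) x :=
      (hrd _ (hss_pos x)).comp x (d_hss x)
    have B : HasDerivAt (fun y => deriv r (hss y)) (deriv (deriv r) (hss x) * h1 x) x :=
      (hrd2 _ (hss_pos x)).comp x (d_hss x)
    have P1 : HasDerivAt (fun y => deriv r (hss y) * (h1 y) ^ 3)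
        (deriv (deriv r) (hss x) * h1 x * (h1 x) ^ 3
          + deriv r (hss x) * ((3 : ℕ) * (h1 x) ^ 2 * h2 x)) x :=
      B.mul ((d_h1 x).pow 3)
    have P2 : HasDerivAt (fun y => r (hss y) * (h1 y * h2 y))
        (deriv r (hss x) * h1 x * (h1 x * h2 x)
          + r (hss x) * (h2 x * h2 x + h1 x * h3 x)) x :=
      A.mul ((d_h1 x).mul (d_h2 x))
    have := (P1.const_mul (1/3 : ℝ)).sub P2
    convert this using 1
    any_goals rfl
    have hode : h3 x = -(r (hss x) * h1 x) := by linarith [hss_ode x]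
    rw [hI]
    push_cast
    rw [hode]
    ring
  -- F is X-periodic
  have h1per : Function.Periodic h1 X := periodic_deriv' hss_per
  have h2per : Function.Periodic h2 X := periodic_deriv' h1per
  have Fper : F X = F 0 := by
    have e1 : hss X = hss 0 := by simpa using hss_per 0
    have e2 : h1 X = h1 0 := by simpa using h1per 0
    have e3 : h2 X = h2 0 := by simpa using h2per 0
    simp only [hF, e1, e2, e3]
  -- continuity and integrability
  have cG : Continuous fun x => deriv (deriv r) (hss x) * (h1 x) ^ 4 :=
    crh2.mul (ch1.pow 4)
  have cL : Continuous fun x =>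
      (h3 x) ^ 2 - r (hss x) * (h2 x) ^ 2 :=
    (ch3.pow 2).sub (crh.mul (ch2.pow 2))
  have cI : Continuous I := cL.add ((continuous_const.mul crh2).mul (ch1.pow 4))
  have intI : ∫ x in (0:ℝ)..X, I x = 0 := by
    rw [intervalIntegral.integral_eq_sub_of_hasDerivAt (fun x _ => dF x)
      (cI.intervalIntegrable 0 X), Fper, sub_self]
  have split : ∫ x in (0:ℝ)..X, I x
      = (∫ x in (0:ℝ)..X, ((h3 x) ^ 2 - r (hss x) * (h2 x) ^ 2))
        + (1/3) * ∫ x in (0:ℝ)..X, deriv (deriv r) (hss x) * (h1 x) ^ 4 := by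
    rw [← intervalIntegral.integral_const_mul, ← intervalIntegral.integral_add
      (g := fun x => (1/3:ℝ) * (deriv (deriv r) (hss x) * h1 x ^ 4))
      (cL.intervalIntegrable 0 X) ((continuous_const.mul cG).intervalIntegrable 0 X)]
    simp only [hI, mul_assoc]
  rw [split] at intI
  linarith
end

section
/- If h_ss is a non-constant C⁴ X-periodic positive solution of h_ss''' + r(h_ss) h_ss' = 0 with r strongly convex on the range of h_ss (r'' > 0 there), then ∫₀^X [(h_ss''')² − r(h_ss)(h_ss'')²] dx < 0; hence the second variation of the energy in the direction u = ±h_ss'' is negative and h_ss is energy unstable. -/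
open Set intervalIntegral

/-- The derivative of a periodic function is periodic. -/
private lemma periodic_deriv_aux {f : ℝ → ℝ} {c : ℝ} (h : Function.Periodic f c) :
    Function.Periodic (deriv f) c := fun x => by
  have hfc : (fun y => f (y + c)) = f := funext h
  calc deriv f (x + c) = deriv (fun y => f (y + c)) x := (deriv_comp_add_const f c x).symm
    _ = deriv f x := by rw [hfc]

/-- If r is strongly convex on the range of a non-constant positive
periodic steady state, then the second variation in the direction u = ±h_ss''
is negative, i.e. the steady state is energy unstable. -/
theorem energy_unstable_convex_r
    (X : ℝ) (hX : 0 < X)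
    (r hss : ℝ → ℝ)
    (hr : ContDiffOn ℝ 2 r (Set.Ioi 0))
    (hr'' : ∀ y ∈ Set.range hss, 0 < deriv (deriv r) y)
    (hss_smooth : ContDiff ℝ 6 hss)
    (hss_per : Function.Periodic hss X)
    (hss_pos : ∀ x, 0 < hss x)
    (hss_nonconst : ∃ x y, hss x ≠ hss y)
    (hss_ode : ∀ x, deriv (deriv (deriv hss)) x + r (hss x) * deriv hss x = 0) :
    ∫ x in (0:ℝ)..X,
        ((deriv (deriv (deriv hss)) x) ^ 2 - r (hss x) * (deriv (deriv hss) x) ^ 2)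
      < 0 := by
  set h1 := deriv hss with hh1
  set h2 := deriv h1 with hh2
  set h3 := deriv h2 with hh3
  -- smoothness of the derivatives
  have C5 : ContDiff ℝ 5 h1 :=
    ((contDiff_succ_iff_deriv (n := 5)).mp (by norm_num [hss_smooth] : ContDiff ℝ (5+1) hss)).2.2
  have C4 : ContDiff ℝ 4 h2 :=
    ((contDiff_succ_iff_deriv (n := 4)).mp (by norm_num [C5] : ContDiff ℝ (4+1) h1)).2.2
  have C3 : ContDiff ℝ 3 h3 :=
    ((contDiff_succ_iff_deriv (n := 3)).mp (by norm_num [C4] : ContDiff ℝ (3+1) h2)).2.2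
  have ch1 : Continuous h1 := C5.continuous
  have ch2 : Continuous h2 := C4.continuous
  have ch3 : Continuous h3 := C3.continuous
  have d1 : ∀ x, HasDerivAt hss (h1 x) x :=
    fun x => ((hss_smooth.differentiable (by norm_num)) x).hasDerivAt
  have d2 : ∀ x, HasDerivAt h1 (h2 x) x :=
    fun x => ((C5.differentiable (by norm_num)) x).hasDerivAt
  have d3 : ∀ x, HasDerivAt h2 (h3 x) x :=
    fun x => ((C4.differentiable (by norm_num)) x).hasDerivAt
  -- facts about r along hss
  have hmem : ∀ x, hss x ∈ Set.Ioi (0:ℝ) := fun x => hss_pos x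
  have hrd : ContDiffOn ℝ 1 (deriv r) (Set.Ioi 0) :=
    hr.deriv_of_isOpen isOpen_Ioi (by norm_num)
  have crh : Continuous (fun x => r (hss x)) :=
    hr.continuousOn.comp_continuous hss_smooth.continuous hmem
  have crdh : Continuous (fun x => deriv r (hss x)) :=
    hrd.continuousOn.comp_continuous hss_smooth.continuous hmem
  have crddh : Continuous (fun x => deriv (deriv r) (hss x)) :=
    (hrd.continuousOn_deriv_of_isOpen isOpen_Ioi le_rfl).comp_continuous
      hss_smooth.continuous hmem
  have dr : ∀ x, HasDerivAt (fun t => r (hss t)) (deriv r (hss x) * h1 x) x := fun x => by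
    have hd : HasDerivAt r (deriv r (hss x)) (hss x) :=
      (((hr.differentiableOn (by norm_num)).differentiableAt
        (isOpen_Ioi.mem_nhds (hmem x)))).hasDerivAt
    exact hd.comp x (d1 x)
  have drd : ∀ x, HasDerivAt (fun t => deriv r (hss t)) (deriv (deriv r) (hss x) * h1 x) x :=
    fun x => by
    have hd : HasDerivAt (deriv r) (deriv (deriv r) (hss x)) (hss x) :=
      (((hrd.differentiableOn (by norm_num)).differentiableAt
        (isOpen_Ioi.mem_nhds (hmem x)))).hasDerivAt
    exact hd.comp x (d1 x)
  -- the ODE rewritten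
  have h3eq : h3 = fun x => -(r (hss x) * h1 x) := funext fun x => by linarith [hss_ode x]
  have d3' : ∀ x, HasDerivAt h3 (-(deriv r (hss x) * h1 x * h1 x + r (hss x) * h2 x)) x := by
    intro x
    rw [h3eq]
    exact ((dr x).mul (d2 x)).neg
  -- the auxiliary function G and its derivative
  set G : ℝ → ℝ := fun x => -(h2 x * h3 x) - 1/3 * (deriv r (hss x) * h1 x ^ 3) with hG
  have hGd : ∀ x, HasDerivAt G
      (-(h3 x ^ 2 - r (hss x) * h2 x ^ 2)
        - 1/3 * (deriv (deriv r) (hss x) * h1 x ^ 4)) x := by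
    intro x
    have H := (((d3 x).mul (d3' x)).neg).sub
      (((drd x).mul ((d2 x).pow 3)).const_mul (1/3 : ℝ))
    have e : (-(h3 x * h3 x + h2 x * -(deriv r (hss x) * h1 x * h1 x + r (hss x) * h2 x))
        - 1/3 * (deriv (deriv r) (hss x) * h1 x * h1 x ^ 3
          + deriv r (hss x) * ((3:ℕ) * h1 x ^ (3-1) * h2 x)))
        = (-(h3 x ^ 2 - r (hss x) * h2 x ^ 2)
          - 1/3 * (deriv (deriv r) (hss x) * h1 x ^ 4)) := by
      norm_num; ring
    exact e ▸ H
  -- continuity of the derivative of G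
  have hgdc : Continuous (fun x => -(h3 x ^ 2 - r (hss x) * h2 x ^ 2)
      - 1/3 * (deriv (deriv r) (hss x) * h1 x ^ 4)) :=
    ((ch3.pow 2).sub (crh.mul (ch2.pow 2))).neg.sub
      (continuous_const.mul (crddh.mul (ch1.pow 4)))
  -- FTC
  have hftc : ∫ x in (0:ℝ)..X, (-(h3 x ^ 2 - r (hss x) * h2 x ^ 2)
      - 1/3 * (deriv (deriv r) (hss x) * h1 x ^ 4)) = G X - G 0 :=
    intervalIntegral.integral_eq_sub_of_hasDerivAt (fun x _ => hGd x)
      (hgdc.intervalIntegrable 0 X)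
  -- periodicity kills the boundary term
  have p1 : Function.Periodic h1 X := periodic_deriv_aux hss_per
  have p2 : Function.Periodic h2 X := periodic_deriv_aux p1
  have p3 : Function.Periodic h3 X := periodic_deriv_aux p2
  have e1 : h1 X = h1 0 := by simpa using p1 0
  have e2 : h2 X = h2 0 := by simpa using p2 0
  have e3 : h3 X = h3 0 := by simpa using p3 0
  have e0 : hss X = hss 0 := by simpa using hss_per 0
  have hGper : G X = G 0 := by rw [hG]; simp only [e1, e2, e3, e0]
  rw [hGper, sub_self] at hftc
  -- split the integral
  have hIc : Continuous (fun x => h3 x ^ 2 - r (hss x) * h2 x ^ 2) :=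
    (ch3.pow 2).sub (crh.mul (ch2.pow 2))
  have hKc : Continuous (fun x => deriv (deriv r) (hss x) * h1 x ^ 4) :=
    crddh.mul (ch1.pow 4)
  rw [intervalIntegral.integral_sub (f := fun x => -(h3 x ^ 2 - r (hss x) * h2 x ^ 2))
      (g := fun x => 1/3 * (deriv (deriv r) (hss x) * h1 x ^ 4)) ((hIc.neg).intervalIntegrable 0 X)
      ((continuous_const.mul hKc).intervalIntegrable 0 X),
    intervalIntegral.integral_neg, intervalIntegral.integral_const_mul] at hftc
  -- positivity of the key integral
  have hKnn : ∀ x, 0 ≤ deriv (deriv r) (hss x) * h1 x ^ 4 := fun x =>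
    mul_nonneg (hr'' _ ⟨x, rfl⟩).le (by positivity)
  -- h1 is not identically zero
  have hne : ∃ x₀, h1 x₀ ≠ 0 := by
    by_contra h
    push_neg at h
    simp only [hh1] at h
    obtain ⟨a, b, hab⟩ := hss_nonconst
    exact hab (is_const_of_deriv_eq_zero (hss_smooth.differentiable (by norm_num)) h a b)
  obtain ⟨x₀, hx₀⟩ := hne
  -- bring the point into [0, X), then into (0, X)
  have hx₁ : h1 (x₀ - ⌊x₀ / X⌋ * X) ≠ 0 := by
    rw [p1.sub_int_mul_eq]; exact hx₀
  have hx₁mem : (x₀ - ⌊x₀ / X⌋ * X) ∈ Set.Ico (0:ℝ) X :=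
    ⟨Int.sub_floor_div_mul_nonneg x₀ hX, Int.sub_floor_div_mul_lt x₀ hX⟩
  have hy : ∃ y ∈ Set.Ioo (0:ℝ) X, h1 y ≠ 0 := by
    rcases eq_or_lt_of_le hx₁mem.1 with h0 | h0
    · have h10 : h1 0 ≠ 0 := by rw [← h0] at hx₁; exact hx₁
      obtain ⟨δ, δpos, hδ⟩ := Metric.eventually_nhds_iff.mp
        (ch1.continuousAt.eventually_ne h10)
      refine ⟨min (δ/2) (X/2), ⟨by positivity, ?_⟩, hδ ?_⟩
      · exact lt_of_le_of_lt (min_le_right _ _) (by linarith)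
      · have h0le : (0:ℝ) ≤ min (δ/2) (X/2) := by positivity
        rw [Real.dist_eq, sub_zero, abs_of_nonneg h0le]
        exact lt_of_le_of_lt (min_le_left _ _) (by linarith)
    · exact ⟨_, ⟨h0, hx₁mem.2⟩, hx₁⟩
  obtain ⟨y, hyI, hyne⟩ := hy
  have hKy : 0 < deriv (deriv r) (hss y) * h1 y ^ 4 :=
    mul_pos (hr'' _ ⟨y, rfl⟩)
      (lt_of_le_of_ne (by positivity) (Ne.symm (pow_ne_zero 4 hyne)))
  have hKpos : 0 < ∫ x in (0:ℝ)..X, deriv (deriv r) (hss x) * h1 x ^ 4 := by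
    rw [intervalIntegral.integral_pos_iff_support_of_nonneg_ae
      (Filter.Eventually.of_forall hKnn) (hKc.intervalIntegrable 0 X)]
    refine ⟨hX, ?_⟩
    obtain ⟨ε, εpos, hε⟩ := Metric.eventually_nhds_iff.mp
      (hKc.continuousAt.eventually_ne (ne_of_gt hKy))
    set a := min ε (min y (X - y)) with ha
    have hapos : 0 < a := lt_min εpos (lt_min hyI.1 (by linarith [hyI.2]))
    have hsub : Set.Ioo (y - a) (y + a) ⊆
        Function.support (fun x => deriv (deriv r) (hss x) * h1 x ^ 4) ∩ Set.Ioc 0 X := by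
      intro t ht
      have hta : |t - y| < a := abs_sub_lt_iff.mpr ⟨by linarith [ht.2], by linarith [ht.1]⟩
      refine ⟨hε ?_, ?_, ?_⟩
      · rw [Real.dist_eq]; exact lt_of_lt_of_le hta (min_le_left _ _)
      · have : a ≤ y := le_trans (min_le_right _ _) (min_le_left _ _)
        linarith [ht.1]
      · have : a ≤ X - y := le_trans (min_le_right _ _) (min_le_right _ _)
        linarith [ht.2]
    refine lt_of_lt_of_le ?_ (MeasureTheory.measure_mono hsub)
    rw [Real.volume_Ioo]
    have : (0:ℝ) < y + a - (y - a) := by linarith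
    exact ENNReal.ofReal_pos.mpr this
  linarith [hftc, hKpos]
end

section
/- Let h_ss ∈ C⁴(ℝ) be a non-constant X-periodic positive solution of h_ss'' + H'(h_ss) = C (constant C) with minimum at x = 0, where H' is C¹ on a neighborhood of the range of h_ss. Then h_ss is even about x = 0, is even about x = X/2, and satisfies h_ss' > 0 on (0, X/2), where X is the least period. -/
open Set

/-- A non-constant positive periodic solution of the nonlinear
oscillator equation with minimum at 0 is even about 0 and about X/2, and is
strictly increasing on (0, X/2), where X is the least period. -/
theorem steady_state_symmetry
    (X : ℝ) (hX : 0 < X)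
    (Hd hss : ℝ → ℝ) (C : ℝ)
    (s : Set ℝ) (hs_open : IsOpen s) (hs_range : Set.range hss ⊆ s)
    (hHd : ContDiffOn ℝ 1 Hd s)
    (hss_smooth : ContDiff ℝ 2 hss)
    (hss_pos : ∀ x, 0 < hss x)
    (hss_nonconst : ∃ x y, hss x ≠ hss y)
    (hss_per : Function.Periodic hss X)
    (hss_least : ∀ T, 0 < T → Function.Periodic hss T → X ≤ T)
    (hss_ode : ∀ x, deriv (deriv hss) x + Hd (hss x) = C)
    (hss_min : ∀ x, hss 0 ≤ hss x)
    (hss_crit : deriv hss 0 = 0) :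
    (∀ t, hss (-t) = hss t) ∧
    (∀ t, hss (X/2 + t) = hss (X/2 - t)) ∧
    (∀ x ∈ Set.Ioo (0:ℝ) (X/2), 0 < deriv hss x) := by
  -- basic smoothness facts
  have h1 : Differentiable ℝ hss := hss_smooth.differentiable (by norm_num)
  have hd1 : ContDiff ℝ 1 (deriv hss) := by
    have h2 : ContDiff ℝ (1 + 1) hss := by exact_mod_cast hss_smooth
    exact (contDiff_succ_iff_deriv.mp h2).2.2
  have h2 : Differentiable ℝ (deriv hss) := hd1.differentiable (by norm_num)
  -- the maximum of hss
  obtain ⟨xM, hxM, hmax⟩ := isCompact_Icc.exists_isMaxOn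
    (Set.nonempty_Icc.mpr hX.le) (h1.continuous.continuousOn (s := Icc 0 X))
  set M := hss xM with hM
  have hrange : Set.range hss = hss '' Icc 0 X := by
    have := hss_per.image_Icc hX 0
    rw [zero_add] at this; exact this.symm
  set K : Set ℝ := Icc (hss 0) M with hKdef
  have hK1 : Set.range hss ⊆ K := by
    rintro _ ⟨x, rfl⟩
    refine ⟨hss_min x, ?_⟩
    have hx : hss x ∈ hss '' Icc 0 X := hrange ▸ mem_range_self x
    obtain ⟨y, hy, hyx⟩ := hx
    rw [← hyx]; exact hmax hy
  have hK2 : K ⊆ Set.range hss := by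
    intro y hy
    exact image_subset_range hss (Icc 0 xM)
      (intermediate_value_Icc hxM.1 h1.continuous.continuousOn hy)
  have hKs : K ⊆ s := fun y hy => hs_range (hK2 hy)
  have hmemK : ∀ x, hss x ∈ K := fun x => hK1 (mem_range_self x)
  -- Lipschitz bound for Hd on K
  have hHd_diff : ∀ x ∈ K, DifferentiableAt ℝ Hd x := fun x hx =>
    (hHd.differentiableOn (by norm_num)).differentiableAt (hs_open.mem_nhds (hKs hx))
  have hderivHd_cont : ContinuousOn (deriv Hd) s :=
    hHd.continuousOn_deriv_of_isOpen hs_open le_rfl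
  obtain ⟨L0, hL0⟩ := isCompact_Icc.exists_bound_of_continuousOn (hderivHd_cont.mono hKs)
  set L : NNReal := ⟨max L0 0, le_max_right _ _⟩ with hL
  have hHdLip : LipschitzOnWith L Hd K := by
    apply Convex.lipschitzOnWith_of_nnnorm_deriv_le hHd_diff ?_ (convex_Icc _ _)
    intro x hx
    rw [← NNReal.coe_le_coe, coe_nnnorm]
    exact (hL0 x hx).trans (le_max_left _ _)
  -- the first-order system vector field
  set vf : ℝ × ℝ → ℝ × ℝ := fun p => (p.2, C - Hd p.1) with hvf
  set Kp : Set (ℝ × ℝ) := K ×ˢ (univ : Set ℝ) with hKp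
  have hvfLip : LipschitzOnWith (max 1 L) vf Kp := by
    rw [lipschitzOnWith_iff_dist_le_mul]
    intro p hp q hq
    rw [Prod.dist_eq]
    have hc : ((max 1 L : NNReal) : ℝ) = max 1 (L : ℝ) := by
      simp [NNReal.coe_max]
    rw [hc]
    have hd0 : (0:ℝ) ≤ dist p q := dist_nonneg
    have e1 : dist (vf p).1 (vf q).1 = dist p.2 q.2 := rfl
    have e2 : dist (vf p).2 (vf q).2 = dist (Hd p.1) (Hd q.1) := by
      show dist (C - Hd p.1) (C - Hd q.1) = _
      rw [Real.dist_eq, Real.dist_eq,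
        show C - Hd p.1 - (C - Hd q.1) = -(Hd p.1 - Hd q.1) by ring, abs_neg]
    rw [e1, e2]
    apply max_le
    · calc dist p.2 q.2 ≤ dist p q := by rw [Prod.dist_eq]; exact le_max_right _ _
        _ = 1 * dist p q := (one_mul _).symm
        _ ≤ max 1 (L:ℝ) * dist p q := by
            apply mul_le_mul_of_nonneg_right (le_max_left _ _) hd0
    · have := hHdLip.dist_le_mul p.1 (mem_prod.mp hp).1 q.1 (mem_prod.mp hq).1
      calc dist (Hd p.1) (Hd q.1) ≤ (L:ℝ) * dist p.1 q.1 := this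
        _ ≤ (L:ℝ) * dist p q := by
            apply mul_le_mul_of_nonneg_left (by rw [Prod.dist_eq]; exact le_max_left _ _ : dist p.1 q.1 ≤ dist p q) L.coe_nonneg
        _ ≤ max 1 (L:ℝ) * dist p q := by
            apply mul_le_mul_of_nonneg_right (le_max_right _ _) hd0
  have ode' : ∀ x, deriv (deriv hss) x = C - Hd (hss x) := fun x => by
    linarith [hss_ode x]
  -- key reflection principle: at any critical point, hss is even about it
  have reflect : ∀ a, deriv hss a = 0 → ∀ t, hss (a + t) = hss (a - t) := by
    intro a ha t
    set u : ℝ → ℝ × ℝ := fun t => (hss (a + t), deriv hss (a + t)) with hu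
    set w : ℝ → ℝ × ℝ := fun t => (hss (a - t), -deriv hss (a - t)) with hw
    have hu' : ∀ τ : ℝ, HasDerivAt u (vf (u τ)) τ := by
      intro τ
      have i1 : HasDerivAt (fun t : ℝ => a + t) 1 τ := (hasDerivAt_id τ).const_add a
      have d1 : HasDerivAt (fun t => hss (a + t)) (deriv hss (a + τ) * 1) τ :=
        ((h1 (a + τ)).hasDerivAt).comp τ i1
      have d2 : HasDerivAt (fun t => deriv hss (a + t)) (deriv (deriv hss) (a + τ) * 1) τ :=
        ((h2 (a + τ)).hasDerivAt).comp τ i1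
      have hder := d1.prodMk d2
      convert hder using 1
      simp [hvf, hu, ode' (a + τ)]
    have hw' : ∀ τ : ℝ, HasDerivAt w (vf (w τ)) τ := by
      intro τ
      have i2 : HasDerivAt (fun t : ℝ => a - t) (-1) τ := (hasDerivAt_id τ).const_sub a
      have d1 : HasDerivAt (fun t => hss (a - t)) (deriv hss (a - τ) * (-1)) τ :=
        ((h1 (a - τ)).hasDerivAt).comp τ i2
      have d2 : HasDerivAt (fun t => -deriv hss (a - t))
          (-(deriv (deriv hss) (a - τ) * (-1))) τ :=
        (((h2 (a - τ)).hasDerivAt).comp τ i2).neg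
      have hder := d1.prodMk d2
      convert hder using 1
      simp [hvf, hw, ode' (a - τ)]
    have ht0 : (0:ℝ) ∈ Ioo (-(|t|+1)) (|t|+1) := by
      constructor <;> [nlinarith [abs_nonneg t]; nlinarith [abs_nonneg t]]
    have heq := ODE_solution_unique_of_mem_Ioo (v := fun _ => vf) (s := fun _ => Kp)
      (fun _ _ => hvfLip) ht0
      (fun τ _ => ⟨hu' τ, mem_prod.mpr ⟨hmemK _, mem_univ _⟩⟩)
      (fun τ _ => ⟨hw' τ, mem_prod.mpr ⟨hmemK _, mem_univ _⟩⟩)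
      (by simp [hu, hw, ha])
    have htm : t ∈ Ioo (-(|t|+1)) (|t|+1) := by
      constructor <;> [nlinarith [neg_abs_le t]; nlinarith [le_abs_self t]]
    exact congrArg Prod.fst (heq htm)
  -- evenness about 0
  have even0 : ∀ t, hss (-t) = hss t := by
    intro t
    have := reflect 0 hss_crit t
    simpa using this.symm
  -- the derivative is odd
  have deriv_odd : ∀ t, deriv hss (-t) = -deriv hss t := by
    intro t
    have dA : HasDerivAt (fun u => hss (-u)) (deriv hss (-t) * (-1)) t :=
      ((h1 (-t)).hasDerivAt).comp t (hasDerivAt_neg t)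
    have funeq : (fun u => hss (-u)) = hss := funext even0
    rw [funeq] at dA
    have := dA.deriv
    linarith
  -- the derivative is periodic
  have deriv_per : ∀ x : ℝ, deriv hss (x + X) = deriv hss x := by
    intro x
    have dA : HasDerivAt (fun y => hss (y + X)) (deriv hss (x + X) * 1) x :=
      ((h1 (x + X)).hasDerivAt).comp x ((hasDerivAt_id x).add_const X)
    have funeq : (fun y : ℝ => hss (y + X)) = hss := funext fun y => hss_per y
    rw [funeq] at dA
    have := dA.deriv
    linarith
  -- derivative vanishes at X/2
  have dhalf : deriv hss (X/2) = 0 := by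
    have hp := deriv_per (-(X/2))
    have he : -(X/2) + X = X/2 := by ring
    rw [he] at hp
    have ho := deriv_odd (X/2)
    linarith
  have evenX : ∀ t, hss (X/2 + t) = hss (X/2 - t) := reflect (X/2) dhalf
  -- no critical points in (0, X/2)
  have nozero : ∀ x ∈ Ioo (0:ℝ) (X/2), deriv hss x ≠ 0 := by
    intro x hx h0
    have evenx := reflect x h0
    have per2 : Function.Periodic hss (2*x) := by
      intro t
      have a1 : t + 2*x = x + (t + x) := by ring
      have a2 : x - (t + x) = -t := by ring
      rw [a1, evenx, a2, even0]
    have hle := hss_least (2*x) (by linarith [hx.1]) per2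
    linarith [hx.2]
  -- the derivative is positive on (0, X/2)
  have sign : ∀ x ∈ Ioo (0:ℝ) (X/2), 0 < deriv hss x := by
    by_contra hcon
    push_neg at hcon
    obtain ⟨x₀, hx₀, hle⟩ := hcon
    have hx0neg : deriv hss x₀ < 0 := lt_of_le_of_ne hle (nozero x₀ hx₀)
    have hneg : ∀ y ∈ Ioo (0:ℝ) (X/2), deriv hss y < 0 := by
      intro y hy
      rcases lt_trichotomy (deriv hss y) 0 with h | h | h
      · exact h
      · exact absurd h (nozero y hy)
      · have hsub : uIcc x₀ y ⊆ Ioo (0:ℝ) (X/2) :=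
          (ordConnected_Ioo).uIcc_subset hx₀ hy
        have hmem : (0:ℝ) ∈ deriv hss '' uIcc x₀ y := by
          apply intermediate_value_uIcc (h2.continuous.continuousOn)
          exact mem_uIcc.mpr (Or.inl ⟨hx0neg.le, h.le⟩)
        obtain ⟨z, hz, hz0⟩ := hmem
        exact absurd hz0 (nozero z (hsub hz))
    have hanti : StrictAntiOn hss (Icc 0 (X/2)) := by
      apply strictAntiOn_of_deriv_neg (convex_Icc _ _) h1.continuous.continuousOn
      intro y hy
      rw [interior_Icc] at hy
      exact hneg y hy
    have hlt : hss (X/4) < hss 0 :=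
      hanti (by constructor <;> linarith) (by constructor <;> linarith) (by linarith)
    exact absurd (hss_min (X/4)) (not_le.mpr hlt)
  exact ⟨even0, evenX, sign⟩
end

section
/- In the odd-perturbation stability proof: suppose h_ss is even with minimum at 0, h_ss' > 0 on (0, X/2), and ũ is a smooth odd X-periodic solution of ũ'' + r(h_ss)ũ + τ̃ũ = 0 with ũ > 0 on (0,b) and ũ(b) = 0 for some b ∈ (0, X/2]. Then τ̃ ∫₀^b ũ h_ss' dx = −ũ'(b) h_ss'(b) ≥ 0, and consequently τ̃ ≥ 0. -/
open Set intervalIntegral Filter Topology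

/-- The eigenvalue identity and sign in the odd-perturbation
stability proof: τ̃ ∫₀^b ũ h_ss' dx = -ũ'(b) h_ss'(b) ≥ 0, hence τ̃ ≥ 0. -/
theorem odd_eigenvalue_nonneg
    (X : ℝ) (hX : 0 < X)
    (r hss u : ℝ → ℝ) (τ b : ℝ)
    (hr_cont : ContinuousOn r (Set.range hss))
    (hss_smooth : ContDiff ℝ 3 hss)
    (hss_per : Function.Periodic hss X)
    (hss_even : ∀ t, hss (-t) = hss t)
    (hss_ode : ∀ x, deriv (deriv (deriv hss)) x + r (hss x) * deriv hss x = 0)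
    (hss_crit : deriv hss 0 = 0)
    (hss_incr : ∀ x ∈ Set.Ioo (0:ℝ) (X/2), 0 < deriv hss x)
    (hu_smooth : ContDiff ℝ 2 u)
    (hu_odd : ∀ x, u (-x) = - u x)
    (hu_per : Function.Periodic u X)
    (hu_ode : ∀ x, deriv (deriv u) x + r (hss x) * u x + τ * u x = 0)
    (hb : b ∈ Set.Ioc (0:ℝ) (X/2))
    (hub : u b = 0)
    (hu_pos : ∀ x ∈ Set.Ioo (0:ℝ) b, 0 < u x) :
    (τ * ∫ x in (0:ℝ)..b, u x * deriv hss x = - deriv u b * deriv hss b) ∧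
    (0 ≤ - deriv u b * deriv hss b) ∧
    0 ≤ τ := by
  obtain ⟨hb0, hbX⟩ := hb
  set v := deriv hss with hv
  -- smoothness facts
  have hu_diff : Differentiable ℝ u := hu_smooth.differentiable (by norm_num)
  have hu2 : ContDiff ℝ 1 (deriv u) := by
    have := (contDiff_succ_iff_deriv.mp (show ContDiff ℝ (1+1) u by exact_mod_cast hu_smooth)).2.2
    exact this
  have hu'_diff : Differentiable ℝ (deriv u) := hu2.differentiable (by norm_num)
  have hv2 : ContDiff ℝ 2 v := by
    have := (contDiff_succ_iff_deriv.mp (show ContDiff ℝ (2+1) hss by exact_mod_cast hss_smooth)).2.2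
    exact this
  have hv_diff : Differentiable ℝ v := hv2.differentiable (by norm_num)
  have hv' : ContDiff ℝ 1 (deriv v) := by
    have := (contDiff_succ_iff_deriv.mp (show ContDiff ℝ (1+1) v by exact_mod_cast hv2)).2.2
    exact this
  have hv'_diff : Differentiable ℝ (deriv v) := hv'.differentiable (by norm_num)
  have hu_cont : Continuous u := hu_diff.continuous
  have hv_cont : Continuous v := hv_diff.continuous
  -- ODEs rewritten
  have hu'' : ∀ x, deriv (deriv u) x = -(r (hss x) * u x + τ * u x) := by
    intro x; have := hu_ode x; linarith
  have hv'' : ∀ x, deriv (deriv v) x = -(r (hss x) * v x) := by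
    intro x; have := hss_ode x; linarith
  have hu0 : u 0 = 0 := by have := hu_odd 0; simp at this; linarith
  -- Wronskian
  set W : ℝ → ℝ := fun x => deriv u x * v x - u x * deriv v x with hW
  have hWder : ∀ x ∈ Set.uIcc (0:ℝ) b, HasDerivAt W (-(τ * (u x * v x))) x := by
    intro x _
    have h1 : HasDerivAt (fun y => deriv u y * v y)
        (deriv (deriv u) x * v x + deriv u x * deriv v x) x :=
      ((hu'_diff x).hasDerivAt.mul (hv_diff x).hasDerivAt)
    have h2 : HasDerivAt (fun y => u y * deriv v y)
        (deriv u x * deriv v x + u x * deriv (deriv v) x) x :=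
      ((hu_diff x).hasDerivAt.mul (hv'_diff x).hasDerivAt)
    have := h1.sub h2
    refine this.congr_deriv ?_
    rw [hu'' x, hv'' x]; ring
  have hint : IntervalIntegrable (fun x => -(τ * (u x * v x))) MeasureTheory.volume 0 b :=
    ((continuous_const.mul (hu_cont.mul hv_cont)).neg).intervalIntegrable 0 b
  have hFTC := intervalIntegral.integral_eq_sub_of_hasDerivAt hWder hint
  have hW0 : W 0 = 0 := by simp [hW, hu0, hss_crit, ← hv]
  have hWb : W b = deriv u b * v b := by simp [hW, hub]
  have hIeq : ∫ x in (0:ℝ)..b, -(τ * (u x * v x)) = deriv u b * v b := by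
    rw [hFTC, hW0, hWb, sub_zero]
  have hIdentity : τ * ∫ x in (0:ℝ)..b, u x * v x = - deriv u b * v b := by
    have : ∫ x in (0:ℝ)..b, -(τ * (u x * v x))
        = -(τ * ∫ x in (0:ℝ)..b, u x * v x) := by
      rw [intervalIntegral.integral_neg, intervalIntegral.integral_const_mul]
    rw [this] at hIeq
    linarith
  -- sign of v b
  have hvb : 0 ≤ v b := by
    have htend : Tendsto v (𝓝[<] b) (𝓝 (v b)) :=
      (hv_cont.continuousAt.continuousWithinAt).tendsto
    refine ge_of_tendsto htend ?_
    filter_upwards [Ioo_mem_nhdsLT_of_mem ⟨hb0, le_refl b⟩] with x hx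
    exact (hss_incr x ⟨hx.1, lt_of_lt_of_le hx.2 hbX⟩).le
  -- sign of deriv u b
  have hub' : deriv u b ≤ 0 := by
    have hd : HasDerivWithinAt u (deriv u b) (Set.Iio b) b :=
      (hu_diff b).hasDerivAt.hasDerivWithinAt
    have hslope := (hasDerivWithinAt_iff_tendsto_slope' (by simp)).mp hd
    refine le_of_tendsto hslope ?_
    have hmem : Set.Ioo (0:ℝ) b ∈ 𝓝[Set.Iio b] b := by
      apply mem_nhdsWithin.mpr
      exact ⟨Set.Ioi 0, isOpen_Ioi, hb0, fun x hx => ⟨hx.1, hx.2⟩⟩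
    filter_upwards [hmem] with x hx
    have hux : 0 < u x := hu_pos x hx
    have : slope u b x = (u x) / (x - b) := by
      simp [slope, hub, div_eq_inv_mul]
    rw [this]
    exact div_nonpos_of_nonneg_of_nonpos hux.le (by linarith [hx.2])
  have hsign : 0 ≤ - deriv u b * v b := mul_nonneg (by linarith) hvb
  -- positivity of integral
  have hIpos : 0 < ∫ x in (0:ℝ)..b, u x * v x := by
    apply intervalIntegral_pos_of_pos_on
    · exact (hu_cont.mul hv_cont).intervalIntegrable 0 b
    · intro x hx
      exact mul_pos (hu_pos x hx) (hss_incr x ⟨hx.1, lt_of_lt_of_le hx.2 hbX⟩)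
    · exact hb0
  refine ⟨hIdentity, hsign, ?_⟩
  have h0 : 0 ≤ τ * ∫ x in (0:ℝ)..b, u x * v x := hIdentity ▸ hsign
  exact nonneg_of_mul_nonneg_right (by linarith [h0]) hIpos
end

section
/- Suppose r(h̄)X² = 4π² and r''(h̄) > 0. Then for the constant steady state h̄ and perturbation u(x) = ±sin(2πx/X): the first, second, and third variations of the energy at h̄ in direction u all vanish, while the fourth variation equals −r''(h̄)∫₀^X sin⁴(2πx/X) dx < 0. Hence h̄ is energy unstable in these directions. -/
open Set Real intervalIntegral MeasureTheory

lemma trig_comp (X : ℝ) (hX : 0 < X) (n : ℕ) :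
    ∫ x in (0:ℝ)..X, Real.sin (2 * Real.pi * x / X) ^ n
      = (X / (2 * Real.pi)) * ∫ u in (0:ℝ)..(2 * Real.pi), Real.sin u ^ n := by
  have hc : (2 * Real.pi / X) ≠ 0 := by positivity
  have h1 : (fun x : ℝ => Real.sin (2 * Real.pi * x / X) ^ n)
      = fun x : ℝ => (fun u => Real.sin u ^ n) ((2 * Real.pi / X) * x) := by
    funext x; rw [show 2 * Real.pi * x / X = 2 * Real.pi / X * x by ring]
  rw [h1, intervalIntegral.integral_comp_mul_left (fun u => Real.sin u ^ n) hc]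
  rw [mul_zero, show 2 * Real.pi / X * X = 2 * Real.pi by field_simp]
  rw [smul_eq_mul]
  congr 1
  exact inv_div _ _

lemma trig1 (X : ℝ) (hX : 0 < X) : ∫ x in (0:ℝ)..X, Real.sin (2 * Real.pi * x / X) = 0 := by
  have := trig_comp X hX 1
  simp only [pow_one] at this
  rw [this, integral_sin]
  simp

lemma trig2 (X : ℝ) (hX : 0 < X) : ∫ x in (0:ℝ)..X, Real.sin (2 * Real.pi * x / X) ^ 2 = X / 2 := by
  rw [trig_comp X hX 2, integral_sin_sq]
  simp
  field_simp

lemma trig3 (X : ℝ) (hX : 0 < X) : ∫ x in (0:ℝ)..X, Real.sin (2 * Real.pi * x / X) ^ 3 = 0 := by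
  rw [trig_comp X hX 3, show (3:ℕ) = 1 + 2 by norm_num, integral_sin_pow]
  simp [integral_sin]

lemma trig4 (X : ℝ) (hX : 0 < X) : ∫ x in (0:ℝ)..X, Real.sin (2 * Real.pi * x / X) ^ 4 = 3 * X / 8 := by
  rw [trig_comp X hX 4, show (4:ℕ) = 2 + 2 by norm_num, integral_sin_pow, integral_sin_sq]
  simp
  field_simp
  ring

lemma trigc (X : ℝ) (hX : 0 < X) : ∫ x in (0:ℝ)..X, Real.cos (2 * Real.pi * x / X) ^ 2 = X / 2 := by
  have hc : (2 * Real.pi / X) ≠ 0 := by positivity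
  have h1 : (fun x : ℝ => Real.cos (2 * Real.pi * x / X) ^ 2)
      = fun x : ℝ => (fun u => Real.cos u ^ 2) ((2 * Real.pi / X) * x) := by
    funext x; rw [show 2 * Real.pi * x / X = 2 * Real.pi / X * x by ring]
  rw [h1, intervalIntegral.integral_comp_mul_left (fun u => Real.cos u ^ 2) hc]
  rw [mul_zero, show 2 * Real.pi / X * X = 2 * Real.pi by field_simp]
  rw [smul_eq_mul, integral_cos_sq]
  simp
  field_simp

lemma nullset (X : ℝ) (hX : 0 < X) :
    volume {x : ℝ | Real.sin (2 * Real.pi * x / X) = 0} = 0 := by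
  have hsub : {x : ℝ | Real.sin (2 * Real.pi * x / X) = 0}
      ⊆ Set.range (fun n : ℤ => (n : ℝ) * Real.pi * X / (2 * Real.pi)) := by
    intro x hx
    rw [Set.mem_setOf_eq, Real.sin_eq_zero_iff] at hx
    obtain ⟨n, hn⟩ := hx
    refine ⟨n, ?_⟩
    have hπ : (2 * Real.pi) ≠ 0 := by positivity
    field_simp at hn ⊢
    linarith [hn]
  exact measure_mono_null hsub (Set.Countable.measure_zero (Set.countable_range _) _)

lemma indic (X : ℝ) (hX : 0 < X) (t c : ℝ) (ht : t ≠ 0) :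
    ∫ x in (0:ℝ)..X, (if 0 < t * Real.sin (2 * Real.pi * x / X) then c else 0) = c * X / 2 := by
  set f : ℝ → ℝ := fun x => if 0 < t * Real.sin (2 * Real.pi * x / X) then c else 0 with hf
  have hmeas : Measurable f := by
    apply Measurable.ite _ measurable_const measurable_const
    exact measurableSet_lt measurable_const (by fun_prop)
  have hbd : ∀ x, ‖f x‖ ≤ |c| := by
    intro x; by_cases h : 0 < t * Real.sin (2 * Real.pi * x / X) <;> simp [hf, h]
  have hint : ∀ a b : ℝ, IntervalIntegrable f volume a b := by
    intro a b
    exact (_root_.intervalIntegrable_const (c := |c|)).mono_fun' hmeas.aestronglyMeasurable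
      (Filter.Eventually.of_forall hbd)
  have hX2 : 0 < X / 2 := by linarith
  have hae : ∀ᵐ x : ℝ, x ≠ X / 2 ∧ x ≠ X := by
    rw [MeasureTheory.ae_iff]
    apply measure_mono_null (t := {X/2, X}) _ (((Set.finite_singleton (X:ℝ)).insert (X/2)).measure_zero _)
    intro x hx
    simp only [Set.mem_setOf_eq, not_and_or, not_not] at hx
    rcases hx with h | h <;> simp [h]
  have hpos : ∀ x ∈ Ioo (0:ℝ) (X/2), 0 < Real.sin (2 * Real.pi * x / X) := by
    intro x hx
    apply Real.sin_pos_of_pos_of_lt_pi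
    · apply div_pos _ hX; nlinarith [Real.pi_pos, hx.1]
    · rw [div_lt_iff₀ hX]; nlinarith [Real.pi_pos, hx.2]
  have hneg : ∀ x ∈ Ioo (X/2) X, Real.sin (2 * Real.pi * x / X) < 0 := by
    intro x hx
    have hq1 : Real.pi < 2 * Real.pi * x / X := by
      rw [lt_div_iff₀ hX]; nlinarith [Real.pi_pos, hx.1]
    have hq2 : 2 * Real.pi * x / X < 2 * Real.pi := by
      rw [div_lt_iff₀ hX]; nlinarith [Real.pi_pos, hx.2]
    rw [← Real.sin_sub_two_pi]
    apply Real.sin_neg_of_neg_of_neg_pi_lt <;> linarith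
  have hsplit : ∫ x in (0:ℝ)..X, f x
      = (∫ x in (0:ℝ)..(X/2), f x) + ∫ x in (X/2)..X, f x :=
    (intervalIntegral.integral_add_adjacent_intervals (hint 0 (X/2)) (hint (X/2) X)).symm
  have hIL : Set.uIoc (0:ℝ) (X/2) = Ioc 0 (X/2) := Set.uIoc_of_le (by linarith)
  have hIR : Set.uIoc (X/2) X = Ioc (X/2) X := Set.uIoc_of_le (by linarith)
  rcases ht.lt_or_gt with htneg | htpos
  · -- t < 0 : left piece 0, right piece c
    have hL : ∫ x in (0:ℝ)..(X/2), f x = ∫ _x in (0:ℝ)..(X/2), (0:ℝ) := by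
      apply intervalIntegral.integral_congr_ae
      filter_upwards [hae] with x hx hxI
      rw [hIL] at hxI
      have hxo : x ∈ Ioo (0:ℝ) (X/2) := ⟨hxI.1, lt_of_le_of_ne hxI.2 hx.1⟩
      have := hpos x hxo
      simp only [hf, if_neg (by nlinarith : ¬ 0 < t * Real.sin (2 * Real.pi * x / X))]
    have hR : ∫ x in (X/2)..X, f x = ∫ _x in (X/2)..X, c := by
      apply intervalIntegral.integral_congr_ae
      filter_upwards [hae] with x hx hxI
      rw [hIR] at hxI
      have hxo : x ∈ Ioo (X/2) X := ⟨hxI.1, lt_of_le_of_ne hxI.2 hx.2⟩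
      have := hneg x hxo
      simp only [hf, if_pos (by nlinarith : 0 < t * Real.sin (2 * Real.pi * x / X))]
    rw [hsplit, hL, hR]
    simp; ring
  · -- t > 0 : left piece c, right piece 0
    have hL : ∫ x in (0:ℝ)..(X/2), f x = ∫ _x in (0:ℝ)..(X/2), c := by
      apply intervalIntegral.integral_congr_ae
      filter_upwards [hae] with x hx hxI
      rw [hIL] at hxI
      have hxo : x ∈ Ioo (0:ℝ) (X/2) := ⟨hxI.1, lt_of_le_of_ne hxI.2 hx.1⟩
      have := hpos x hxo
      simp only [hf, if_pos (by nlinarith : 0 < t * Real.sin (2 * Real.pi * x / X))]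
    have hR : ∫ x in (X/2)..X, f x = ∫ _x in (X/2)..X, (0:ℝ) := by
      apply intervalIntegral.integral_congr_ae
      filter_upwards [hae] with x hx hxI
      rw [hIR] at hxI
      have hxo : x ∈ Ioo (X/2) X := ⟨hxI.1, lt_of_le_of_ne hxI.2 hx.2⟩
      have := hneg x hxo
      simp only [hf, if_neg (by nlinarith : ¬ 0 < t * Real.sin (2 * Real.pi * x / X))]
    rw [hsplit, hL, hR]
    simp; ring

lemma key (hbar δ X : ℝ) (hδ : 0 < δ) (f f' φ w : ℝ → ℝ)
    (hf : ∀ y ∈ Ioo (hbar - δ) (hbar + δ), HasDerivAt f (f' y) y)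
    (hf' : ContinuousOn f' (Ioo (hbar - δ) (hbar + δ)))
    (hφ : Continuous φ) (hφ1 : ∀ x, |φ x| ≤ 1)
    (hw : Continuous w) (hw1 : ∀ x, |w x| ≤ 1)
    (ε₀ : ℝ) (hε₀ : |ε₀| < δ / 2) :
    HasDerivAt (fun ε => ∫ x in (0:ℝ)..X, f (hbar + ε * φ x) * w x)
      (∫ x in (0:ℝ)..X, f' (hbar + ε₀ * φ x) * (φ x * w x)) ε₀ := by
  set J := Ioo (hbar - δ) (hbar + δ) with hJ
  set K := Icc (hbar - δ/2) (hbar + δ/2) with hK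
  have hKJ : K ⊆ J := by
    apply Icc_subset_Ioo <;> linarith
  have hfc : ContinuousOn f J := fun y hy => ((hf y hy).continuousAt).continuousWithinAt
  -- membership of the composed point
  have hmem : ∀ (ε : ℝ), |ε| ≤ δ / 2 → ∀ x : ℝ, hbar + ε * φ x ∈ K := by
    intro ε hε x
    have h1 : |ε * φ x| ≤ δ / 2 := by
      rw [abs_mul]
      calc |ε| * |φ x| ≤ (δ/2) * 1 := by
            apply mul_le_mul hε (hφ1 x) (abs_nonneg _) (by linarith)
        _ = δ/2 := by ring
    rw [abs_le] at h1
    constructor <;> simp <;> linarith [h1.1, h1.2]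
  -- bound for f' on K
  obtain ⟨C, hC⟩ := (isCompact_Icc (a := hbar - δ/2) (b := hbar + δ/2)).exists_bound_of_continuousOn
    (hf'.mono hKJ)
  have hC0 : 0 ≤ C := le_trans (norm_nonneg _) (hC (hbar) (by constructor <;> simp <;> linarith))
  set ρ := δ/2 - |ε₀| with hρ
  have hρpos : 0 < ρ := by simp [hρ]; linarith
  have hball : ∀ ε ∈ Metric.ball ε₀ ρ, |ε| ≤ δ / 2 := by
    intro ε hε
    rw [Metric.mem_ball, Real.dist_eq] at hε
    calc |ε| ≤ |ε - ε₀| + |ε₀| := by have := abs_sub_abs_le_abs_sub ε ε₀; linarith [abs_add_le (ε - ε₀) ε₀]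
      _ ≤ δ/2 := by simp [hρ] at hε; linarith
  have hcont : ∀ (ε : ℝ), |ε| ≤ δ/2 → Continuous (fun x => f (hbar + ε * φ x) * w x) := by
    intro ε hε
    apply Continuous.mul _ hw
    apply ContinuousOn.comp_continuous hfc (by fun_prop)
    intro x; exact hKJ (hmem ε hε x)
  have hcont' : ∀ (ε : ℝ), |ε| ≤ δ/2 → Continuous (fun x => f' (hbar + ε * φ x) * (φ x * w x)) := by
    intro ε hε
    apply Continuous.mul _ (hφ.mul hw)
    apply ContinuousOn.comp_continuous hf' (by fun_prop)
    intro x; exact hKJ (hmem ε hε x)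
  have := intervalIntegral.hasDerivAt_integral_of_dominated_loc_of_deriv_le
    (F := fun ε x => f (hbar + ε * φ x) * w x)
    (F' := fun ε x => f' (hbar + ε * φ x) * (φ x * w x))
    (a := 0) (b := X) (μ := volume) (x₀ := ε₀) (bound := fun _ => C)
    (Metric.ball_mem_nhds ε₀ hρpos) ?_ ?_ ?_ ?_ ?_ ?_
  · exact this.2
  · -- eventual measurability
    filter_upwards [Metric.ball_mem_nhds ε₀ hρpos] with ε hε
    exact ((hcont ε (hball ε hε)).aestronglyMeasurable).restrict
  · exact (hcont ε₀ hε₀.le).intervalIntegrable 0 X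
  · exact ((hcont' ε₀ hε₀.le).aestronglyMeasurable).restrict
  · -- bound
    apply Filter.Eventually.of_forall
    intro x _ ε hε
    rw [Real.norm_eq_abs, abs_mul]
    calc |f' (hbar + ε * φ x)| * |φ x * w x| ≤ C * 1 := by
          apply mul_le_mul _ _ (abs_nonneg _) hC0
          · have := hC _ (hmem ε (hball ε hε) x); rwa [Real.norm_eq_abs] at this
          · rw [abs_mul]
            calc |φ x| * |w x| ≤ 1 * 1 := mul_le_mul (hφ1 x) (hw1 x) (abs_nonneg _) zero_le_one
              _ = 1 := by ring
      _ = C := by ring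
  · exact intervalIntegrable_const
  · -- differentiability
    apply Filter.Eventually.of_forall
    intro x _ ε hε
    have hin : HasDerivAt (fun ε : ℝ => hbar + ε * φ x) (φ x) ε := by
      simpa using (hasDerivAt_id ε).mul_const (φ x) |>.const_add hbar
    have hout := hf _ (hKJ (hmem ε (hball ε hε) x))
    have := (hout.comp ε hin).mul_const (w x)
    simpa [mul_assoc] using this

lemma rep (hbar : ℝ) (hhbar : 0 < hbar) (r H : ℝ → ℝ)
    (hrc : ContinuousOn r (Ioi 0)) (hrpos : 0 < r hbar)
    (hH : ∀ y > (0:ℝ), deriv (deriv H) y = r y) :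
    ∃ δ, 0 < δ ∧ (Ioo (hbar - δ) (hbar + δ) ⊆ Ioi 0) ∧
      (∀ y ∈ Ioo (hbar - δ) (hbar + δ), 0 < r y) ∧
      ∃ c : ℝ, ∃ Ht : ℝ → ℝ,
        (∀ y ∈ Ioo (hbar - δ) (hbar + δ), HasDerivAt Ht (deriv H y) y) ∧
        (∀ y ∈ Ioo (hbar - δ) (hbar + δ), HasDerivAt (deriv H) (r y) y) ∧
        (∀ y ∈ Ioo (hbar - δ) (hbar + δ), y ≠ hbar →
          H y = Ht y + (if hbar < y then c else 0)) := by
  -- Step 1: find δ₀ with positivity of r and of y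
  have hcr : ContinuousAt r hbar := hrc.continuousAt (Ioi_mem_nhds hhbar)
  have h1 : ∀ᶠ y in nhds hbar, 0 < r y ∧ 0 < y :=
    (hcr.eventually_mem (Ioi_mem_nhds hrpos)).and (Ioi_mem_nhds hhbar)
  obtain ⟨δ₀, hδ₀pos, hδ₀⟩ := Metric.eventually_nhds_iff.1 h1
  have hJ₀ : ∀ y ∈ Ioo (hbar - δ₀) (hbar + δ₀), 0 < r y ∧ 0 < y := by
    intro y hy
    apply hδ₀
    rw [Real.dist_eq, abs_sub_lt_iff]
    constructor <;> [linarith [hy.2]; linarith [hy.1]]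
  -- Step 2: deriv H has derivative r on J₀
  have hg : ∀ y ∈ Ioo (hbar - δ₀) (hbar + δ₀), HasDerivAt (deriv H) (r y) y := by
    intro y hy
    obtain ⟨hry, hy0⟩ := hJ₀ y hy
    have h0 := hH y hy0
    have hd : DifferentiableAt ℝ (deriv H) y := by
      by_contra hc
      rw [deriv_zero_of_not_differentiableAt hc] at h0
      linarith
    have := hd.hasDerivAt
    rwa [h0] at this
  -- Step 3: δ ≤ δ₀ such that deriv H ≠ 0 off hbar
  have hstep3 : ∃ δ, 0 < δ ∧ δ ≤ δ₀ ∧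
      ∀ y ∈ Ioo (hbar - δ) (hbar + δ), y ≠ hbar → deriv H y ≠ 0 := by
    by_cases hg0 : deriv H hbar = 0
    · refine ⟨δ₀, hδ₀pos, le_refl _, ?_⟩
      have hmono : StrictMonoOn (deriv H) (Ioo (hbar - δ₀) (hbar + δ₀)) := by
        apply strictMonoOn_of_deriv_pos (convex_Ioo _ _)
        · intro y hy; exact ((hg y hy).differentiableAt).continuousAt.continuousWithinAt
        · intro y hy
          rw [interior_Ioo] at hy
          rw [(hg y hy).deriv]
          exact (hJ₀ y hy).1
      intro y hy hne h0
      have hbarmem : hbar ∈ Ioo (hbar - δ₀) (hbar + δ₀) := by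
        constructor <;> simp <;> linarith
      exact hne (hmono.injOn hy hbarmem (by rw [h0, hg0]))
    · have hcg : ContinuousAt (deriv H) hbar :=
        ((hg hbar (by constructor <;> simp <;> linarith)).differentiableAt).continuousAt
      have h2 : ∀ᶠ y in nhds hbar, deriv H y ≠ 0 := hcg.eventually_ne hg0
      obtain ⟨δ₁, hδ₁pos, hδ₁⟩ := Metric.eventually_nhds_iff.1 h2
      refine ⟨min δ₀ δ₁, lt_min hδ₀pos hδ₁pos, min_le_left _ _, ?_⟩
      intro y hy _
      apply hδ₁
      rw [Real.dist_eq, abs_sub_lt_iff]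
      have := min_le_right δ₀ δ₁
      constructor <;> [linarith [hy.2]; linarith [hy.1]]
  obtain ⟨δ, hδpos, hδle, hne0⟩ := hstep3
  set J := Ioo (hbar - δ) (hbar + δ) with hJdef
  have hJJ₀ : J ⊆ Ioo (hbar - δ₀) (hbar + δ₀) := Ioo_subset_Ioo (by linarith) (by linarith)
  have hgJ : ∀ y ∈ J, HasDerivAt (deriv H) (r y) y := fun y hy => hg y (hJJ₀ hy)
  have hgc : ContinuousOn (deriv H) J :=
    fun y hy => ((hgJ y hy).differentiableAt).continuousAt.continuousWithinAt
  have hJord : OrdConnected J := ordConnected_Ioo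
  -- H is differentiable off hbar
  have hHd : ∀ y ∈ J, y ≠ hbar → HasDerivAt H (deriv H y) y := by
    intro y hy hne
    have hd : DifferentiableAt ℝ H y := by
      by_contra hc
      exact hne0 y hy hne (deriv_zero_of_not_differentiableAt hc)
    exact hd.hasDerivAt
  -- the FTC antiderivative
  set a := hbar - δ/2 with ha
  set b := hbar + δ/2 with hb
  have haJ : a ∈ J := by constructor <;> simp [ha] <;> linarith
  have hbJ : b ∈ J := by constructor <;> simp [hb] <;> linarith
  set Ht : ℝ → ℝ := fun y => H a + ∫ t in a..y, deriv H t with hHt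
  have hint : ∀ y ∈ J, IntervalIntegrable (deriv H) volume a y := by
    intro y hy
    exact (hgc.mono (hJord.uIcc_subset haJ hy)).intervalIntegrable
  have hHtd : ∀ y ∈ J, HasDerivAt Ht (deriv H y) y := by
    intro y hy
    apply HasDerivAt.const_add
    apply intervalIntegral.integral_hasDerivAt_right (hint y hy)
    · exact hgc.stronglyMeasurableAtFilter isOpen_Ioo y hy
    · exact ((hgJ y hy).differentiableAt).continuousAt
  -- left identity
  have hleft : ∀ y ∈ Ioo (hbar - δ) hbar, H y = Ht y := by
    intro y hy
    have hyJ : y ∈ J := ⟨hy.1, by linarith [hy.2]⟩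
    have haL : a ∈ Ioo (hbar - δ) hbar := by constructor <;> simp [ha] <;> linarith
    have hsub : uIcc a y ⊆ Ioo (hbar - δ) hbar :=
      (ordConnected_Ioo).uIcc_subset haL hy
    have hftc : ∫ t in a..y, deriv H t = H y - H a := by
      apply intervalIntegral.integral_eq_sub_of_hasDerivAt
      · intro t ht
        have htL := hsub ht
        exact hHd t ⟨htL.1, by linarith [htL.2]⟩ (ne_of_lt htL.2)
      · exact hint y hyJ
    simp [hHt, hftc]
  -- right identity
  set c := H b - Ht b with hc
  have hright : ∀ y ∈ Ioo hbar (hbar + δ), H y = Ht y + c := by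
    intro y hy
    have hyJ : y ∈ J := ⟨by linarith [hy.1], hy.2⟩
    have hbR : b ∈ Ioo hbar (hbar + δ) := by constructor <;> simp [hb] <;> linarith
    have hsub : uIcc b y ⊆ Ioo hbar (hbar + δ) :=
      (ordConnected_Ioo).uIcc_subset hbR hy
    have hftc : ∫ t in b..y, deriv H t = H y - H b := by
      apply intervalIntegral.integral_eq_sub_of_hasDerivAt
      · intro t ht
        have htR := hsub ht
        exact hHd t ⟨by linarith [htR.1], htR.2⟩ (ne_of_gt htR.1)
      · exact (hgc.mono (hJord.uIcc_subset hbJ hyJ)).intervalIntegrable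
    have hHtdiff : Ht y - Ht b = ∫ t in b..y, deriv H t := by
      simp only [hHt]
      rw [add_sub_add_left_eq_sub]
      rw [intervalIntegral.integral_interval_sub_left (hint y hyJ) (hint b hbJ)]
    have : H y - Ht y = H b - Ht b := by linarith [hHtdiff, hftc]
    linarith [this]
  refine ⟨δ, hδpos, ?_, ?_, c, Ht, hHtd, hgJ, ?_⟩
  · intro y hy; exact (hJ₀ y (hJJ₀ hy)).2
  · intro y hy; exact (hJ₀ y (hJJ₀ hy)).1
  · intro y hy hne
    rcases lt_or_gt_of_ne hne with h | h
    · rw [if_neg (by linarith)]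
      rw [hleft y ⟨hy.1, h⟩]
      ring
    · rw [if_pos h]
      exact hright y ⟨h, hy.2⟩

lemma step_ball {ρ : ℝ} (hρ : 0 < ρ) (u v : ℝ → ℝ)
    (h : ∀ ε ∈ Metric.ball (0:ℝ) ρ, HasDerivAt u (v ε) ε) (n : ℕ) :
    iteratedDeriv (n + 1) u 0 = iteratedDeriv n v 0 := by
  rw [iteratedDeriv_succ']
  apply Filter.EventuallyEq.iteratedDeriv_eq
  filter_upwards [Metric.ball_mem_nhds (0:ℝ) hρ] with ε hε
  exact (h ε hε).deriv

lemma transfer {f g : ℝ → ℝ} {ρ : ℝ} (hρ : 0 < ρ)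
    (heq : ∀ ε ∈ Metric.ball (0:ℝ) ρ, ε ≠ 0 → f ε = g ε)
    (hgc : ContinuousAt g 0) (hg0 : deriv g 0 = 0) :
    deriv f 0 = 0 ∧ deriv f =ᶠ[nhds 0] deriv g := by
  have hU : IsOpen (Metric.ball (0:ℝ) ρ \ {0}) :=
    Metric.isOpen_ball.sdiff isClosed_singleton
  have hpunct : ∀ ε, ε ∈ Metric.ball (0:ℝ) ρ → ε ≠ 0 → deriv f ε = deriv g ε := by
    intro ε hε hne
    apply Filter.EventuallyEq.deriv_eq
    apply Filter.eventuallyEq_of_mem (hU.mem_nhds ⟨hε, hne⟩)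
    intro x hx
    exact heq x hx.1 hx.2
  have h0 : deriv f 0 = 0 := by
    by_cases hd : DifferentiableAt ℝ f 0
    · -- f is continuous at 0, forcing f 0 = g 0 and then f =ᶠ g
      have hfg0 : f 0 = g 0 := by
        have htf : Filter.Tendsto f (nhdsWithin 0 {(0:ℝ)}ᶜ) (nhds (f 0)) :=
          (hd.continuousAt.tendsto).mono_left nhdsWithin_le_nhds
        have htg : Filter.Tendsto g (nhdsWithin 0 {(0:ℝ)}ᶜ) (nhds (g 0)) :=
          (hgc.tendsto).mono_left nhdsWithin_le_nhds
        have hfg : f =ᶠ[nhdsWithin 0 {(0:ℝ)}ᶜ] g := by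
          rw [Filter.eventuallyEq_iff_exists_mem]
          refine ⟨Metric.ball 0 ρ ∩ {(0:ℝ)}ᶜ, ?_, fun x hx => heq x hx.1 hx.2⟩
          exact mem_nhdsWithin.2 ⟨Metric.ball 0 ρ, Metric.isOpen_ball,
            Metric.mem_ball_self hρ, fun x hx => ⟨hx.1, hx.2⟩⟩
        exact tendsto_nhds_unique (htf.congr' hfg) htg
      have : f =ᶠ[nhds 0] g := by
        filter_upwards [Metric.ball_mem_nhds (0:ℝ) hρ] with ε hε
        by_cases hne : ε = 0
        · rw [hne]; exact hfg0
        · exact heq ε hε hne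
      rw [this.deriv_eq, hg0]
    · exact deriv_zero_of_not_differentiableAt hd
  refine ⟨h0, ?_⟩
  filter_upwards [Metric.ball_mem_nhds (0:ℝ) hρ] with ε hε
  by_cases hne : ε = 0
  · rw [hne, h0, hg0]
  · exact hpunct ε hε hne

set_option maxHeartbeats 2000000 in
/-- At the degenerate stability threshold r(h̄)X² = 4π² with
r''(h̄) > 0, the first three variations of the energy at the constant steady
state h̄ in the directions ±sin(2πx/X) vanish, while the fourth variation
equals −r''(h̄)∫ sin⁴(2πx/X) dx < 0: energy instability. -/
theorem constant_state_degenerate_instability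
    (X : ℝ) (hX : 0 < X) (hbar : ℝ) (hhbar : 0 < hbar)
    (r H : ℝ → ℝ)
    (hr : ContDiffOn ℝ 2 r (Set.Ioi 0))
    (hH : ∀ y > (0:ℝ), deriv (deriv H) y = r y)
    (hthreshold : r hbar * X ^ 2 = 4 * Real.pi ^ 2)
    (hconvex : 0 < deriv (deriv r) hbar)
    (s : ℝ) (hs : s = 1 ∨ s = -1) :
    (deriv (fun ε : ℝ => ∫ x in (0:ℝ)..X,
        ((1/2) * (deriv (fun y => hbar + ε * (s * Real.sin (2 * Real.pi * y / X))) x) ^ 2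
          - H (hbar + ε * (s * Real.sin (2 * Real.pi * x / X))))) 0 = 0) ∧
    (iteratedDeriv 2 (fun ε : ℝ => ∫ x in (0:ℝ)..X,
        ((1/2) * (deriv (fun y => hbar + ε * (s * Real.sin (2 * Real.pi * y / X))) x) ^ 2
          - H (hbar + ε * (s * Real.sin (2 * Real.pi * x / X))))) 0 = 0) ∧
    (iteratedDeriv 3 (fun ε : ℝ => ∫ x in (0:ℝ)..X,
        ((1/2) * (deriv (fun y => hbar + ε * (s * Real.sin (2 * Real.pi * y / X))) x) ^ 2
          - H (hbar + ε * (s * Real.sin (2 * Real.pi * x / X))))) 0 = 0) ∧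
    (iteratedDeriv 4 (fun ε : ℝ => ∫ x in (0:ℝ)..X,
        ((1/2) * (deriv (fun y => hbar + ε * (s * Real.sin (2 * Real.pi * y / X))) x) ^ 2
          - H (hbar + ε * (s * Real.sin (2 * Real.pi * x / X))))) 0
      = - deriv (deriv r) hbar * ∫ x in (0:ℝ)..X, (Real.sin (2 * Real.pi * x / X)) ^ 4) ∧
    (- deriv (deriv r) hbar * ∫ x in (0:ℝ)..X, (Real.sin (2 * Real.pi * x / X)) ^ 4 < 0) := by
  have hπ := Real.pi_pos
  have hs2 : s * s = 1 := by rcases hs with h | h <;> rw [h] <;> norm_num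
  have hsne : s ≠ 0 := by rcases hs with h | h <;> rw [h] <;> norm_num
  have hs1 : |s| = 1 := by rcases hs with h | h <;> rw [h] <;> norm_num
  set φ : ℝ → ℝ := fun x => s * Real.sin (2 * Real.pi * x / X) with hφdef
  have hφc : Continuous φ := by fun_prop
  have hφ1 : ∀ x, |φ x| ≤ 1 := by
    intro x
    rw [hφdef, abs_mul, hs1, one_mul]
    exact Real.abs_sin_le_one _
  set E : ℝ → ℝ := fun ε : ℝ => ∫ x in (0:ℝ)..X,
      ((1/2) * (deriv (fun y => hbar + ε * (s * Real.sin (2 * Real.pi * y / X))) x) ^ 2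
        - H (hbar + ε * (s * Real.sin (2 * Real.pi * x / X)))) with hEdef
  -- inner derivative computation
  have hinner : ∀ (ε x : ℝ),
      deriv (fun y => hbar + ε * (s * Real.sin (2 * Real.pi * y / X))) x
        = ε * (s * (Real.cos (2 * Real.pi * x / X) * (2 * Real.pi / X))) := by
    intro ε x
    have hlin : HasDerivAt (fun y : ℝ => 2 * Real.pi * y / X) (2 * Real.pi / X) x := by
      simpa using ((hasDerivAt_id x).const_mul (2 * Real.pi)).div_const X
    have hsin : HasDerivAt (fun y : ℝ => Real.sin (2 * Real.pi * y / X))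
        (Real.cos (2 * Real.pi * x / X) * (2 * Real.pi / X)) x :=
      hlin.sin
    exact (((hsin.const_mul s).const_mul ε).const_add hbar).deriv
  -- Q and B
  set Q : ℝ → ℝ := fun x => (1/2) * (2 * Real.pi / X * Real.cos (2 * Real.pi * x / X)) ^ 2
    with hQdef
  have hQc : Continuous Q := by fun_prop
  set B : ℝ := ∫ x in (0:ℝ)..X, Q x with hBdef
  have hBval : B = (1/2) * (2 * Real.pi / X) ^ 2 * (X / 2) := by
    rw [hBdef]
    have : ∀ x : ℝ, Q x = ((1/2) * (2 * Real.pi / X) ^ 2) * Real.cos (2 * Real.pi * x / X) ^ 2 := by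
      intro x; rw [hQdef]; ring
    rw [intervalIntegral.integral_congr (fun x _ => this x), intervalIntegral.integral_const_mul,
      trigc X hX]
  -- rewriting E
  have hEeq : ∀ ε : ℝ, E ε = ∫ x in (0:ℝ)..X, (Q x * ε ^ 2 - H (hbar + ε * φ x)) := by
    intro ε
    rw [hEdef]
    apply intervalIntegral.integral_congr
    intro x _
    dsimp only
    rw [hinner ε x, hQdef, hφdef]
    have : (1/2) * (ε * (s * (Real.cos (2 * Real.pi * x / X) * (2 * Real.pi / X)))) ^ 2
        = (1/2) * (2 * Real.pi / X * Real.cos (2 * Real.pi * x / X)) ^ 2 * ε ^ 2 := by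
      have : ε * (s * (Real.cos (2 * Real.pi * x / X) * (2 * Real.pi / X)))
          * (ε * (s * (Real.cos (2 * Real.pi * x / X) * (2 * Real.pi / X))))
          = (2 * Real.pi / X * Real.cos (2 * Real.pi * x / X))
            * (2 * Real.pi / X * Real.cos (2 * Real.pi * x / X)) * (ε * ε) := by
        nlinarith [hs2]
      nlinarith [this]
    rw [this]
  -- structure of H
  obtain ⟨δ, hδpos, hJpos, hrposJ, c, Ht, hHtd, hgJ, hrep⟩ :=
    rep hbar hhbar r H hr.continuousOn (by nlinarith [Real.pi_pos]) hH
  set J := Ioo (hbar - δ) (hbar + δ) with hJdef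
  -- r chain
  have hrd : ∀ y ∈ J, HasDerivAt r (deriv r y) y := by
    intro y hy
    exact ((hr.differentiableOn (by norm_num)).differentiableAt
      (isOpen_Ioi.mem_nhds (hJpos hy))).hasDerivAt
  have hr1 : ContDiffOn ℝ 1 (deriv r) (Ioi 0) :=
    hr.deriv_of_isOpen isOpen_Ioi (by norm_num)
  have hr1d : ∀ y ∈ J, HasDerivAt (deriv r) (deriv (deriv r) y) y := by
    intro y hy
    exact ((hr1.differentiableOn (by norm_num)).differentiableAt
      (isOpen_Ioi.mem_nhds (hJpos hy))).hasDerivAt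
  have hr1c : ContinuousOn (deriv r) J := fun y hy =>
    ((hr1d y hy).differentiableAt).continuousAt.continuousWithinAt
  have hr2c : ContinuousOn (deriv (deriv r)) J :=
    (hr1.continuousOn_deriv_of_isOpen isOpen_Ioi (by norm_num)).mono hJpos
  have hgc : ContinuousOn (deriv H) J := fun y hy =>
    ((hgJ y hy).differentiableAt).continuousAt.continuousWithinAt
  have hrc : ContinuousOn r J := hr.continuousOn.mono hJpos
  -- weights
  set w0 : ℝ → ℝ := fun _ => (1:ℝ) with hw0
  set w1 : ℝ → ℝ := fun x => φ x * w0 x with hw1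
  set w2 : ℝ → ℝ := fun x => φ x * w1 x with hw2
  set w3 : ℝ → ℝ := fun x => φ x * w2 x with hw3
  set w4 : ℝ → ℝ := fun x => φ x * w3 x with hw4
  have hw0c : Continuous w0 := continuous_const
  have hw1c : Continuous w1 := by fun_prop
  have hw2c : Continuous w2 := by fun_prop
  have hw3c : Continuous w3 := by fun_prop
  have hbd : ∀ (u v : ℝ → ℝ), Continuous u → (∀ x, |u x| ≤ 1) → v = (fun x => φ x * u x) →
      (∀ x, |v x| ≤ 1) := by
    intro u v hu h1 hv x
    rw [hv, abs_mul]
    calc |φ x| * |u x| ≤ 1 * 1 := mul_le_mul (hφ1 x) (h1 x) (abs_nonneg _) zero_le_one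
      _ = 1 := by ring
  have hw01 : ∀ x, |w0 x| ≤ 1 := by intro x; rw [hw0]; norm_num
  have hw11 : ∀ x, |w1 x| ≤ 1 := hbd w0 w1 hw0c hw01 rfl
  have hw21 : ∀ x, |w2 x| ≤ 1 := hbd w1 w2 hw1c hw11 rfl
  have hw31 : ∀ x, |w3 x| ≤ 1 := hbd w2 w3 hw2c hw21 rfl
  -- the G functions
  set G0 : ℝ → ℝ := fun ε => ∫ x in (0:ℝ)..X, Ht (hbar + ε * φ x) * w0 x with hG0
  set G1 : ℝ → ℝ := fun ε => ∫ x in (0:ℝ)..X, deriv H (hbar + ε * φ x) * w1 x with hG1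
  set G2 : ℝ → ℝ := fun ε => ∫ x in (0:ℝ)..X, r (hbar + ε * φ x) * w2 x with hG2
  set G3 : ℝ → ℝ := fun ε => ∫ x in (0:ℝ)..X, deriv r (hbar + ε * φ x) * w3 x with hG3
  set G4 : ℝ → ℝ := fun ε => ∫ x in (0:ℝ)..X, deriv (deriv r) (hbar + ε * φ x) * w4 x with hG4
  have hboll : ∀ ε₀ : ℝ, ε₀ ∈ Metric.ball (0:ℝ) (δ/2) → |ε₀| < δ/2 := by
    intro ε₀ h
    rw [Metric.mem_ball, Real.dist_eq, sub_zero] at h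
    exact h
  have hG0d : ∀ ε₀ ∈ Metric.ball (0:ℝ) (δ/2), HasDerivAt G0 (G1 ε₀) ε₀ := by
    intro ε₀ h
    exact key hbar δ X hδpos Ht (deriv H) φ w0 hHtd hgc hφc hφ1 hw0c hw01 ε₀ (hboll ε₀ h)
  have hG1d : ∀ ε₀ ∈ Metric.ball (0:ℝ) (δ/2), HasDerivAt G1 (G2 ε₀) ε₀ := by
    intro ε₀ h
    exact key hbar δ X hδpos (deriv H) r φ w1 hgJ hrc hφc hφ1 hw1c hw11 ε₀ (hboll ε₀ h)
  have hG2d : ∀ ε₀ ∈ Metric.ball (0:ℝ) (δ/2), HasDerivAt G2 (G3 ε₀) ε₀ := by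
    intro ε₀ h
    exact key hbar δ X hδpos r (deriv r) φ w2 hrd hr1c hφc hφ1 hw2c hw21 ε₀ (hboll ε₀ h)
  have hG3d : ∀ ε₀ ∈ Metric.ball (0:ℝ) (δ/2), HasDerivAt G3 (G4 ε₀) ε₀ := by
    intro ε₀ h
    exact key hbar δ X hδpos (deriv r) (deriv (deriv r)) φ w3 hr1d hr2c hφc hφ1 hw3c hw31 ε₀
      (hboll ε₀ h)
  -- the smooth model Et and its derivative chain
  set Et : ℝ → ℝ := fun ε => B * ε ^ 2 - G0 ε - c * X / 2 with hEt
  set Et1 : ℝ → ℝ := fun ε => B * (2 * ε) - G1 ε with hEt1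
  set Et2 : ℝ → ℝ := fun ε => B * 2 - G2 ε with hEt2
  set Et3 : ℝ → ℝ := fun ε => -G3 ε with hEt3
  set Et4 : ℝ → ℝ := fun ε => -G4 ε with hEt4
  have hEtd : ∀ ε ∈ Metric.ball (0:ℝ) (δ/2), HasDerivAt Et (Et1 ε) ε := by
    intro ε h
    have h1 : HasDerivAt (fun ε : ℝ => B * ε ^ 2) (B * (2 * ε)) ε := by
      simpa [mul_comm] using (hasDerivAt_pow 2 ε).const_mul B
    exact (h1.sub (hG0d ε h)).sub_const (c * X / 2)
  have hEt1d : ∀ ε ∈ Metric.ball (0:ℝ) (δ/2), HasDerivAt Et1 (Et2 ε) ε := by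
    intro ε h
    have h1 : HasDerivAt (fun ε : ℝ => B * (2 * ε)) (B * 2) ε := by
      simpa [mul_assoc] using ((hasDerivAt_id ε).const_mul (B * 2))
    exact h1.sub (hG1d ε h)
  have hEt2d : ∀ ε ∈ Metric.ball (0:ℝ) (δ/2), HasDerivAt Et2 (Et3 ε) ε := by
    intro ε h
    simpa [hEt3] using (hG2d ε h).const_sub (B * 2)
  have hEt3d : ∀ ε ∈ Metric.ball (0:ℝ) (δ/2), HasDerivAt Et3 (Et4 ε) ε := by
    intro ε h
    exact (hG3d ε h).neg

  have hδ2 : (0:ℝ) < δ/2 := by linarith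
  have h0ball : (0:ℝ) ∈ Metric.ball (0:ℝ) (δ/2) := Metric.mem_ball_self hδ2
  -- values of the G's at 0
  have hzero : ∀ x : ℝ, hbar + (0:ℝ) * φ x = hbar := by intro x; ring
  have hG1v : G1 0 = 0 := by
    rw [hG1]
    dsimp only
    have hpt : ∀ x ∈ uIcc (0:ℝ) X, deriv H (hbar + (0:ℝ) * φ x) * w1 x
        = (deriv H hbar * s) * Real.sin (2 * Real.pi * x / X) := by
      intro x _
      rw [hzero x, hw1, hw0, hφdef]
      ring
    rw [intervalIntegral.integral_congr hpt, intervalIntegral.integral_const_mul, trig1 X hX,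
      mul_zero]
  have hG2v : G2 0 = r hbar * (X / 2) := by
    rw [hG2]
    dsimp only
    have hpt : ∀ x ∈ uIcc (0:ℝ) X, r (hbar + (0:ℝ) * φ x) * w2 x
        = (r hbar * (s * s)) * Real.sin (2 * Real.pi * x / X) ^ 2 := by
      intro x _
      rw [hzero x, hw2, hw1, hw0, hφdef]
      ring
    rw [intervalIntegral.integral_congr hpt, intervalIntegral.integral_const_mul, trig2 X hX,
      hs2, mul_one]
  have hG3v : G3 0 = 0 := by
    rw [hG3]
    dsimp only
    have hpt : ∀ x ∈ uIcc (0:ℝ) X, deriv r (hbar + (0:ℝ) * φ x) * w3 x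
        = (deriv r hbar * (s * s * s)) * Real.sin (2 * Real.pi * x / X) ^ 3 := by
      intro x _
      rw [hzero x, hw3, hw2, hw1, hw0, hφdef]
      ring
    rw [intervalIntegral.integral_congr hpt, intervalIntegral.integral_const_mul, trig3 X hX,
      mul_zero]
  have hG4v : G4 0 = deriv (deriv r) hbar * ∫ x in (0:ℝ)..X, Real.sin (2 * Real.pi * x / X) ^ 4 := by
    rw [hG4]
    dsimp only
    have hpt : ∀ x ∈ uIcc (0:ℝ) X, deriv (deriv r) (hbar + (0:ℝ) * φ x) * w4 x
        = (deriv (deriv r) hbar * (s * s * (s * s))) * Real.sin (2 * Real.pi * x / X) ^ 4 := by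
      intro x _
      rw [hzero x, hw4, hw3, hw2, hw1, hw0, hφdef]
      ring
    rw [intervalIntegral.integral_congr hpt, intervalIntegral.integral_const_mul, hs2, mul_one,
      mul_one]
  -- values of the Et's at 0
  have hEt1v : Et1 0 = 0 := by rw [hEt1]; dsimp only; rw [hG1v]; ring
  have hEt2v : Et2 0 = 0 := by
    rw [hEt2]; dsimp only; rw [hG2v, hBval]
    have hXne : X ≠ 0 := ne_of_gt hX
    field_simp
    nlinarith [hthreshold]
  have hEt3v : Et3 0 = 0 := by rw [hEt3]; dsimp only; rw [hG3v, neg_zero]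
  have hEt4v : Et4 0
      = - deriv (deriv r) hbar * ∫ x in (0:ℝ)..X, Real.sin (2 * Real.pi * x / X) ^ 4 := by
    rw [hEt4]; dsimp only; rw [hG4v, neg_mul]
  -- E agrees with Et away from 0
  have hN : ∀ᵐ x : ℝ, Real.sin (2 * Real.pi * x / X) ≠ 0 := by
    rw [MeasureTheory.ae_iff]
    simpa using nullset X hX
  have hEkey : ∀ ε ∈ Metric.ball (0:ℝ) (δ/2), ε ≠ 0 → E ε = Et ε := by
    intro ε hball hne
    have hεlt := hboll ε hball
    have hmemJ : ∀ x : ℝ, hbar + ε * φ x ∈ J := by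
      intro x
      have h1 : |ε * φ x| ≤ |ε| := by
        rw [abs_mul]
        calc |ε| * |φ x| ≤ |ε| * 1 := by
              apply mul_le_mul_of_nonneg_left (hφ1 x) (abs_nonneg _)
          _ = |ε| := by ring
      rw [abs_le] at h1
      rw [hJdef, Set.mem_Ioo]
      constructor <;> linarith [h1.1, h1.2, hεlt, hδpos]
    have hHtc : ContinuousOn Ht J := fun y hy =>
      ((hHtd y hy).differentiableAt).continuousAt.continuousWithinAt
    have hcomp : Continuous (fun x => Ht (hbar + ε * φ x)) :=
      ContinuousOn.comp_continuous hHtc (by fun_prop) hmemJ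
    set ind : ℝ → ℝ := fun x => if 0 < ε * s * Real.sin (2 * Real.pi * x / X) then c else 0
      with hinddef
    have hindmeas : Measurable ind := by
      apply Measurable.ite _ measurable_const measurable_const
      exact measurableSet_lt measurable_const (by fun_prop)
    have hindint : IntervalIntegrable ind volume 0 X := by
      apply (_root_.intervalIntegrable_const (c := |c|)).mono_fun' hindmeas.aestronglyMeasurable
      apply Filter.Eventually.of_forall
      intro x
      by_cases h : 0 < ε * s * Real.sin (2 * Real.pi * x / X) <;> simp [hinddef, h]
    have hae : ∀ᵐ x : ℝ, x ∈ Set.uIoc (0:ℝ) X →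
        Q x * ε ^ 2 - H (hbar + ε * φ x)
          = Q x * ε ^ 2 - (Ht (hbar + ε * φ x) + ind x) := by
      filter_upwards [hN] with x hsin _
      have hyne : hbar + ε * φ x ≠ hbar := by
        have : ε * φ x ≠ 0 := mul_ne_zero hne (mul_ne_zero hsne hsin)
        simpa using this
      have hrep' := hrep (hbar + ε * φ x) (hmemJ x) hyne
      rw [hrep']
      have hiff : (hbar < hbar + ε * φ x) ↔ (0 < ε * s * Real.sin (2 * Real.pi * x / X)) := by
        rw [lt_add_iff_pos_right, hφdef, mul_assoc]
      rw [hinddef]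
      congr 2
      simp only [hiff]
    have hQint : IntervalIntegrable (fun x => Q x * ε ^ 2) volume 0 X :=
      (hQc.mul continuous_const).intervalIntegrable 0 X
    have h1 : E ε = ∫ x in (0:ℝ)..X, (Q x * ε ^ 2 - (Ht (hbar + ε * φ x) + ind x)) := by
      rw [hEeq ε]
      exact intervalIntegral.integral_congr_ae hae
    rw [h1, intervalIntegral.integral_sub hQint (hcomp.intervalIntegrable 0 X |>.add hindint),
      intervalIntegral.integral_add (hcomp.intervalIntegrable 0 X) hindint]
    rw [intervalIntegral.integral_mul_const]
    rw [indic X hX (ε * s) c (mul_ne_zero hne hsne)]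
    rw [hEt]
    dsimp only
    rw [hBdef, hG0]
    dsimp only
    have : (∫ x in (0:ℝ)..X, Ht (hbar + ε * φ x) * w0 x)
        = ∫ x in (0:ℝ)..X, Ht (hbar + ε * φ x) := by
      apply intervalIntegral.integral_congr
      intro x _
      rw [hw0]; ring
    rw [this]
    ring
  -- transfer to E
  have hEtc : ContinuousAt Et 0 := (hEtd 0 h0ball).continuousAt
  have hEtder0 : deriv Et 0 = 0 := by rw [(hEtd 0 h0ball).deriv, hEt1v]
  obtain ⟨hD1, hDeq⟩ := transfer hδ2 hEkey hEtc hEtder0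
  have hiter : ∀ n : ℕ, iteratedDeriv (n + 1) E 0 = iteratedDeriv (n + 1) Et 0 := by
    intro n
    rw [iteratedDeriv_succ', iteratedDeriv_succ']
    exact hDeq.iteratedDeriv_eq n
  -- iterated derivative values of Et
  have h2v : iteratedDeriv 2 Et 0 = Et2 0 := by
    rw [show (2:ℕ) = 1 + 1 by norm_num, step_ball hδ2 Et Et1 hEtd 1, iteratedDeriv_one,
      (hEt1d 0 h0ball).deriv]
  have h3v : iteratedDeriv 3 Et 0 = Et3 0 := by
    rw [show (3:ℕ) = 2 + 1 by norm_num, step_ball hδ2 Et Et1 hEtd 2,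
      show (2:ℕ) = 1 + 1 by norm_num, step_ball hδ2 Et1 Et2 hEt1d 1, iteratedDeriv_one,
      (hEt2d 0 h0ball).deriv]
  have h4v : iteratedDeriv 4 Et 0 = Et4 0 := by
    rw [show (4:ℕ) = 3 + 1 by norm_num, step_ball hδ2 Et Et1 hEtd 3,
      show (3:ℕ) = 2 + 1 by norm_num, step_ball hδ2 Et1 Et2 hEt1d 2,
      show (2:ℕ) = 1 + 1 by norm_num, step_ball hδ2 Et2 Et3 hEt2d 1, iteratedDeriv_one,
      (hEt3d 0 h0ball).deriv]
  refine ⟨hD1, ?_, ?_, ?_, ?_⟩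
  · rw [show (2:ℕ) = 1 + 1 by norm_num, hiter 1, show (1+1:ℕ) = 2 by norm_num, h2v, hEt2v]
  · rw [show (3:ℕ) = 2 + 1 by norm_num, hiter 2, show (2+1:ℕ) = 3 by norm_num, h3v, hEt3v]
  · rw [show (4:ℕ) = 3 + 1 by norm_num, hiter 3, show (3+1:ℕ) = 4 by norm_num, h4v, hEt4v]
  · rw [trig4 X hX]
    nlinarith [hconvex, hX]
end

section
/- Nonlinear stability of the constant steady state: assume r(h̄)X² < 4π² and let δ, C be as in the quadratic energy bounds (δ/2)‖u‖²_{H¹} ≤ E(h̄+u) − E(h̄) ≤ (C/2)‖u‖²_{H¹} for zero-mean ‖u‖_{H¹} ≤ δ. If h(·,t) is a curve in H¹(𝕋_X) with mean value h̄, with t ↦ E(h(·,t)) nonincreasing, ‖h(·,0) − h̄‖_{H¹} < √(δ³/(4C)), and ‖h(·,t) − h̄‖_{H¹} ≤ δ for all t ∈ [0,T], then ‖h(·,t) − h̄‖_{H¹} < δ/2 for all t ∈ [0,T]. -/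
open Set

/-!
The energy is a Lyapunov function: along the curve,
`(δ/2) ‖h t - h̄‖² ≤ E (h t) - E h̄ ≤ E (h 0) - E h̄ ≤ (C/2) ‖h 0 - h̄‖² < δ³/8 = (δ/2) (δ/2)²`.
-/

theorem mul_norm_sub_sq_le_of_energy_le {V : Type*} [SeminormedAddCommGroup V]
    {E M : V → ℝ} {hbar : V} {a b ρ : ℝ}
    (hbounds : ∀ u : V, M u = 0 → ‖u‖ ≤ ρ →
      a * ‖u‖ ^ 2 ≤ E (hbar + u) - E hbar ∧ E (hbar + u) - E hbar ≤ b * ‖u‖ ^ 2)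
    {v w : V} (hv : M (v - hbar) = 0) (hw : M (w - hbar) = 0)
    (hvρ : ‖v - hbar‖ ≤ ρ) (hwρ : ‖w - hbar‖ ≤ ρ) (hE : E v ≤ E w) :
    a * ‖v - hbar‖ ^ 2 ≤ b * ‖w - hbar‖ ^ 2 := by
  have hlower := (hbounds _ hv hvρ).1
  have hupper := (hbounds _ hw hwρ).2
  rw [add_sub_cancel] at hlower hupper
  linarith

theorem lt_half_of_mul_sq_le_mul_sq {δ C x y : ℝ} (hδ : 0 < δ) (hC : 0 < C)
    (hy : 0 ≤ y) (hxy : δ / 2 * x ^ 2 ≤ C / 2 * y ^ 2)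
    (hy_small : y < √(δ ^ 3 / (4 * C))) : x < δ / 2 := by
  have hy_sq : y ^ 2 < δ ^ 3 / (4 * C) := by
    rw [← Real.sq_sqrt (by positivity : 0 ≤ δ ^ 3 / (4 * C))]
    gcongr
  have hx_sq : δ / 2 * x ^ 2 < δ / 2 * (δ / 2) ^ 2 :=
    calc δ / 2 * x ^ 2 ≤ C / 2 * y ^ 2 := hxy
      _ < C / 2 * (δ ^ 3 / (4 * C)) := by gcongr
      _ = δ / 2 * (δ / 2) ^ 2 := by field_simp; ring
  exact lt_of_pow_lt_pow_left₀ 2 (by positivity) (lt_of_mul_lt_mul_left hx_sq (by positivity))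

theorem nonlinear_stability_constant_state_general
    {V : Type*} [NormedAddCommGroup V]
    (E : V → ℝ) (M : V → ℝ) (hbar : V)
    (δ C T : ℝ) (hδ : δ ∈ Set.Ioo (0:ℝ) 1) (hC : 1 ≤ C)
    (hbounds : ∀ u : V, M u = 0 → ‖u‖ ≤ δ →
      (δ / 2) * ‖u‖ ^ 2 ≤ E (hbar + u) - E hbar ∧
      E (hbar + u) - E hbar ≤ (C / 2) * ‖u‖ ^ 2)
    (h : ℝ → V)
    (hmean : ∀ t, M (h t - hbar) = 0)
    (hdissip : ∀ s t, 0 ≤ s → s ≤ t → t ≤ T → E (h t) ≤ E (h s))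
    (hinit : ‖h 0 - hbar‖ < Real.sqrt (δ ^ 3 / (4 * C)))
    (hstay : ∀ t ∈ Set.Icc (0:ℝ) T, ‖h t - hbar‖ ≤ δ) :
    ∀ t ∈ Set.Icc (0:ℝ) T, ‖h t - hbar‖ < δ / 2 := by
  intro t ht
  have h0 : (0 : ℝ) ∈ Icc 0 T := ⟨le_rfl, ht.1.trans ht.2⟩
  have henergy := mul_norm_sub_sq_le_of_energy_le hbounds (hmean t) (hmean 0)
    (hstay t ht) (hstay 0 h0) (hdissip 0 t le_rfl ht.1 ht.2)
  exact lt_half_of_mul_sq_le_mul_sq hδ.1 (one_pos.trans_le hC) (norm_nonneg _)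
    henergy hinit

/-- Nonlinear stability of the constant steady state via the
dissipated energy and the two-sided quadratic bounds. Here V abstracts H¹(𝕋_X),
M is the mean-value functional, h̄ the constant steady state, and t ↦ h t an
energy-dissipating curve with mean h̄. -/
theorem nonlinear_stability_constant_state
    {V : Type*} [NormedAddCommGroup V]
    (E : V → ℝ) (M : V → ℝ) (hbar : V)
    (δ C T : ℝ) (hδ : δ ∈ Set.Ioo (0:ℝ) 1) (hC : 1 ≤ C) (hT : 0 ≤ T)
    (hbounds : ∀ u : V, M u = 0 → ‖u‖ ≤ δ →
      (δ / 2) * ‖u‖ ^ 2 ≤ E (hbar + u) - E hbar ∧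
      E (hbar + u) - E hbar ≤ (C / 2) * ‖u‖ ^ 2)
    (h : ℝ → V)
    (hmean : ∀ t, M (h t - hbar) = 0)
    (hdissip : ∀ s t, 0 ≤ s → s ≤ t → t ≤ T → E (h t) ≤ E (h s))
    (hinit : ‖h 0 - hbar‖ < Real.sqrt (δ ^ 3 / (4 * C)))
    (hstay : ∀ t ∈ Set.Icc (0:ℝ) T, ‖h t - hbar‖ ≤ δ) :
    ∀ t ∈ Set.Icc (0:ℝ) T, ‖h t - hbar‖ < δ / 2 :=
  nonlinear_stability_constant_state_general E M hbar δ C T hδ hC hbounds h hmean hdissip hinit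
    hstay
end

section
/- For −1 < q < 3, q ≠ 0, and for a zero contact angle droplet steady state ĥ of length X̂ ≤ X and area h̄X obtained by rescaling the canonical profile k₀, the energy difference with the constant steady state h̄ is E(ĥ) − E(h̄) = (1/q) B^{3/(3−q)} (h̄X)^{(3+q)/(3−q)} [ ((q−3)/(q+3)) A(0)^{2q/(q−3)} + (1/(q+1)) (B h̄^{q−1}X²)^{q/(q−3)} ]. Consequently E(h̄) > E(ĥ) if and only if B h̄^{q−1}X² > A(0)² [(3+q)/((3−q)(q+1))]^{(3−q)/q}. -/
open Set Real intervalIntegral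

set_option maxHeartbeats 1000000

private lemma aux_exp_log {a b : ℝ} (ha : 0 < a) (hb : 0 < b)
    (h : Real.log a = Real.log b) : a = b := by
  rw [← Real.exp_log ha, ← Real.exp_log hb, h]

private lemma aux_mul_neg_iff {a b : ℝ} (ha : 0 < a) : a * b < 0 ↔ b < 0 := by
  constructor
  · intro h
    by_contra hb
    push_neg at hb
    exact absurd (mul_nonneg ha.le hb) (not_le.mpr h)
  · exact fun h => mul_neg_of_pos_of_neg ha h

private lemma aux_mul_pos_iff {a b : ℝ} (ha : 0 < a) : 0 < a * b ↔ 0 < b := by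
  constructor
  · intro h
    by_contra hb
    push_neg at hb
    have : a * b ≤ 0 := mul_nonpos_iff.mpr (Or.inl ⟨ha.le, hb⟩)
    exact absurd this (not_le.mpr h)
  · exact fun h => mul_pos ha h

/-- Energy difference between a zero contact angle droplet steady
state (rescaled from the canonical profile k₀) and the constant steady state h̄
of the same area, for power law coefficients with −1 < q < 3, q ≠ 0; and the
resulting criterion for the droplet to have lower energy. Real exponents are
interpreted via `Real.rpow`. -/
theorem droplet_vs_constant_energy
    (q B hbar X : ℝ)
    (hq1 : -1 < q) (hq3 : q < 3) (hq0 : q ≠ 0)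
    (hB : 0 < B) (hhbar : 0 < hbar) (hX : 0 < X)
    (G : ℝ → ℝ) (hG : ∀ y : ℝ, G y = y ^ (q + 1) / (q * (q + 1)))
    (k₀ : ℝ → ℝ) (P0 A0 : ℝ) (hP0 : 0 < P0) (hA0 : 0 < A0)
    (hk_cont : Continuous k₀)
    (hk_smooth : ContDiffOn ℝ 2 k₀ (Set.Ioo 0 P0))
    (hk0 : k₀ 0 = 0) (hkP : k₀ P0 = 0)
    (hk_angle0 : deriv k₀ 0 = 0) (hk_angleP : deriv k₀ P0 = 0)
    (hk_pos : ∀ x ∈ Set.Ioo (0:ℝ) P0, 0 < k₀ x)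
    (hk_ode : ∀ x ∈ Set.Ioo (0:ℝ) P0,
      deriv (deriv k₀) x + ((k₀ x) ^ q - 1) / q = 0)
    (hk_area : (∫ x in (0:ℝ)..P0, k₀ x) = A0)
    (hk_energy : (∫ x in (0:ℝ)..P0, ((1/2) * (deriv k₀ x) ^ 2 - G (k₀ x)))
      = ((q - 3) / (q * (q + 3))) * A0)
    (Xhat : ℝ) (hXhat_pos : 0 < Xhat) (hXhat_le : Xhat ≤ X)
    (hXhat : B * Xhat ^ (3 - q) * (hbar * X) ^ (q - 1) = P0 ^ (3 - q) * A0 ^ (q - 1))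
    (hhat : ℝ → ℝ)
    (hhat_def : ∀ x : ℝ, hhat x =
      if x ∈ Set.Icc (0:ℝ) Xhat then
        ((hbar * X) / A0) * (P0 / Xhat) * k₀ ((P0 / Xhat) * x)
      else 0) :
    ((∫ x in (0:ℝ)..X, ((1/2) * (deriv hhat x) ^ 2 - B * G (hhat x)))
        - (∫ x in (0:ℝ)..X, (0 - B * G hbar))
      = (1/q) * B ^ (3 / (3 - q)) * (hbar * X) ^ ((3 + q) / (3 - q)) *
          (((q - 3) / (q + 3)) * A0 ^ (2 * q / (q - 3))
            + (1 / (q + 1)) * (B * hbar ^ (q - 1) * X ^ 2) ^ (q / (q - 3)))) ∧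
    ((∫ x in (0:ℝ)..X, (0 - B * G hbar))
        > (∫ x in (0:ℝ)..X, ((1/2) * (deriv hhat x) ^ 2 - B * G (hhat x)))
      ↔ B * hbar ^ (q - 1) * X ^ 2
          > A0 ^ (2:ℝ) * ((3 + q) / ((3 - q) * (q + 1))) ^ ((3 - q) / q)) := by
  have h3q : (3:ℝ) - q ≠ 0 := by linarith
  have hq30 : q - 3 ≠ 0 := by linarith
  have hq1p : (0:ℝ) < q + 1 := by linarith
  have hq3p : (0:ℝ) < q + 3 := by linarith
  have hq1n : q + 1 ≠ 0 := ne_of_gt hq1p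
  have hq3n : q + 3 ≠ 0 := ne_of_gt hq3p
  have h3qp : (0:ℝ) < 3 - q := by linarith
  have hHX : 0 < hbar * X := mul_pos hhbar hX
  set s : ℝ := P0 / Xhat with hs_def
  have hs : 0 < s := div_pos hP0 hXhat_pos
  have hsX : s * Xhat = P0 := div_mul_cancel₀ _ hXhat_pos.ne'
  set c : ℝ := (hbar * X) / A0 * s with hc_def
  have hc : 0 < c := mul_pos (div_pos hHX hA0) hs
  -- a pile of nonvanishing facts
  have ne1 : B * Xhat ^ (3 - q) ≠ 0 := by positivity
  have ne2 : Xhat ^ (3 - q) ≠ 0 := by positivity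
  have ne3 : (hbar * X) ^ (q - 1) ≠ 0 := by positivity
  have ne4 : P0 ^ (3 - q) ≠ 0 := by positivity
  have ne5 : A0 ^ (q - 1) ≠ 0 := by positivity
  have ne6 : c ^ (q + 1) ≠ 0 := by positivity
  have ne7 : c ^ 2 ≠ 0 := by positivity
  have ne8 : c ^ 2 * s ^ 2 ≠ 0 := by positivity
  have ne9 : c ^ 2 * s ≠ 0 := by positivity
  have ne10 : B ^ (3 / (3 - q)) ≠ 0 := by positivity
  have ne11 : (hbar * X) ^ ((3 + q) / (3 - q)) ≠ 0 := by positivity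
  have ne12 : B ^ (3 / (3 - q)) * (hbar * X) ^ ((3 + q) / (3 - q)) ≠ 0 := by positivity
  have ne13 : A0 ^ (2 * q / (q - 3)) ≠ 0 := by positivity
  have ne14 : hbar ^ (q + 1) ≠ 0 := by positivity
  have ne15 : B * hbar ^ (q + 1) ≠ 0 := by positivity
  have ne16 : hbar ^ (q - 1) ≠ 0 := by positivity
  have ne17 : (X:ℝ) ^ 2 ≠ 0 := by positivity
  have ne18 : B * hbar ^ (q - 1) ≠ 0 := by positivity
  have ne19 : (B * hbar ^ (q - 1) * X ^ 2) ^ (q / (q - 3)) ≠ 0 := by positivity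
  have hYpos : (0:ℝ) < B * hbar ^ (q - 1) * X ^ 2 := by positivity
  -- log relation from hXhat
  have lh : Real.log B + (3-q)*Real.log Xhat + (q-1)*Real.log (hbar*X)
      = (3-q)*Real.log P0 + (q-1)*Real.log A0 := by
    have h := congrArg Real.log hXhat
    rwa [Real.log_mul ne1 ne3, Real.log_mul hB.ne' ne2,
      Real.log_rpow hXhat_pos, Real.log_rpow hHX,
      Real.log_mul ne4 ne5, Real.log_rpow hP0, Real.log_rpow hA0] at h
  have hLs : Real.log s =
      (Real.log B + (q-1)*Real.log (hbar*X) - (q-1)*Real.log A0)/(3-q) := by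
    rw [hs_def, Real.log_div hP0.ne' hXhat_pos.ne', eq_div_iff h3q]
    linear_combination -lh
  have hLc : Real.log c = Real.log (hbar*X) - Real.log A0 + Real.log s := by
    rw [hc_def, Real.log_mul (by positivity) hs.ne', Real.log_div hHX.ne' hA0.ne']
  -- three positive power identities
  have E1 : B * c ^ (q + 1) = c ^ 2 * s ^ 2 := by
    apply aux_exp_log (by positivity) (by positivity)
    rw [Real.log_mul hB.ne' ne6, Real.log_rpow hc,
      Real.log_mul ne7 (by positivity), Real.log_pow, Real.log_pow,
      hLc, hLs]
    push_cast
    field_simp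
    ring
  have E2pos : c ^ 2 * s * A0
      = B ^ (3 / (3 - q)) * (hbar * X) ^ ((3 + q) / (3 - q)) * A0 ^ (2 * q / (q - 3)) := by
    apply aux_exp_log (by positivity) (by positivity)
    rw [Real.log_mul ne9 hA0.ne', Real.log_mul ne7 hs.ne', Real.log_pow,
      Real.log_mul ne12 ne13, Real.log_mul ne10 ne11,
      Real.log_rpow hB, Real.log_rpow hHX, Real.log_rpow hA0, hLc, hLs]
    push_cast
    field_simp
    ring
  have E3pos : X * (B * hbar ^ (q + 1))
      = B ^ (3 / (3 - q)) * (hbar * X) ^ ((3 + q) / (3 - q)) *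
        (B * hbar ^ (q - 1) * X ^ 2) ^ (q / (q - 3)) := by
    apply aux_exp_log (by positivity) (by positivity)
    rw [Real.log_mul hX.ne' ne15, Real.log_mul hB.ne' ne14,
      Real.log_rpow hhbar,
      Real.log_mul ne12 ne19, Real.log_mul ne10 ne11,
      Real.log_rpow hB, Real.log_rpow hHX,
      Real.log_rpow hYpos,
      Real.log_mul ne18 ne17, Real.log_mul hB.ne' ne16,
      Real.log_rpow hhbar, Real.log_pow,
      Real.log_mul hhbar.ne' hX.ne']
    push_cast
    field_simp
    ring
  -- pointwise identity on (0, Xhat)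
  have hmemI : ∀ x ∈ Set.Ioo (0:ℝ) Xhat, s * x ∈ Set.Ioo (0:ℝ) P0 := by
    intro x hx
    refine ⟨mul_pos hs hx.1, ?_⟩
    calc s * x < s * Xhat := mul_lt_mul_of_pos_left hx.2 hs
      _ = P0 := hsX
  have heq : ∀ x ∈ Set.Ioo (0:ℝ) Xhat,
      (1/2) * (deriv hhat x) ^ 2 - B * G (hhat x)
        = c ^ 2 * s ^ 2 * ((1/2) * (deriv k₀ (s*x)) ^ 2 - G (k₀ (s*x))) := by
    intro x hx
    have hm := hmemI x hx
    have hev : hhat =ᶠ[nhds x] fun y => c * k₀ (s * y) := by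
      filter_upwards [isOpen_Ioo.mem_nhds hx] with y hy
      rw [hhat_def y, if_pos ⟨hy.1.le, hy.2.le⟩]
    have hdk : DifferentiableAt ℝ k₀ (s*x) :=
      (hk_smooth.contDiffAt (isOpen_Ioo.mem_nhds hm)).differentiableAt (by norm_num)
    have h1 : HasDerivAt (fun y : ℝ => s * y) s x := by
      simpa using (hasDerivAt_id x).const_mul s
    have h2 : HasDerivAt (fun y => c * k₀ (s * y)) (c * (deriv k₀ (s*x) * s)) x :=
      (hdk.hasDerivAt.comp x h1).const_mul c
    have hD : deriv hhat x = c * (deriv k₀ (s*x) * s) := by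
      rw [hev.deriv_eq]; exact h2.deriv
    have hH : hhat x = c * k₀ (s*x) := by
      rw [hhat_def x, if_pos ⟨hx.1.le, hx.2.le⟩]
    have hkpos : 0 ≤ k₀ (s*x) := (hk_pos _ hm).le
    rw [hD, hH, hG, hG, Real.mul_rpow hc.le hkpos]
    linear_combination (-(k₀ (s*x)) ^ (q+1) / (q*(q+1))) * E1
  have hae_ne : ∀ᵐ x : ℝ, x ≠ Xhat := by
    have h0 : (MeasureTheory.volume ({Xhat} : Set ℝ)) = 0 :=
      MeasureTheory.measure_singleton _
    filter_upwards [MeasureTheory.compl_mem_ae_iff.mpr h0] with x hx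
    simpa using hx
  have hIoo_of : ∀ x, x ∈ Set.uIoc (0:ℝ) Xhat → x ≠ Xhat → x ∈ Set.Ioo (0:ℝ) Xhat := by
    intro x hxI hxne
    rw [Set.uIoc_of_le hXhat_pos.le] at hxI
    exact ⟨hxI.1, lt_of_le_of_ne hxI.2 hxne⟩
  -- integrability of the canonical energy density
  have hf_int : IntervalIntegrable
      (fun y => (1/2) * (deriv k₀ y) ^ 2 - G (k₀ y)) MeasureTheory.volume 0 P0 := by
    by_contra hnot
    rw [intervalIntegral.integral_undef hnot] at hk_energy
    have h1 : (q-3)/(q*(q+3)) ≠ 0 :=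
      div_ne_zero (by linarith) (mul_ne_zero hq0 hq3n)
    exact (mul_ne_zero h1 hA0.ne') hk_energy.symm
  have hPsX : P0 / s = Xhat := by
    rw [hs_def]; field_simp
  have hFint1 : IntervalIntegrable
      (fun x => (1/2) * (deriv hhat x) ^ 2 - B * G (hhat x))
      MeasureTheory.volume 0 Xhat := by
    have h1 := (hf_int.comp_mul_left (c := s)).const_mul (c ^ 2 * s ^ 2)
    rw [zero_div, hPsX] at h1
    refine h1.congr_ae ((MeasureTheory.ae_restrict_iff' measurableSet_uIoc).mpr ?_)
    filter_upwards [hae_ne] with x hxne hxI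
    exact (heq x (hIoo_of x hxI hxne)).symm
  have key1 : (∫ x in (0:ℝ)..Xhat, ((1/2) * (deriv hhat x) ^ 2 - B * G (hhat x)))
      = ∫ x in (0:ℝ)..Xhat,
          c ^ 2 * s ^ 2 * ((1/2) * (deriv k₀ (s*x)) ^ 2 - G (k₀ (s*x))) := by
    apply intervalIntegral.integral_congr_ae
    filter_upwards [hae_ne] with x hxne hxI
    exact heq x (hIoo_of x hxI hxne)
  have key2 : (∫ x in (0:ℝ)..Xhat,
        c ^ 2 * s ^ 2 * ((1/2) * (deriv k₀ (s*x)) ^ 2 - G (k₀ (s*x))))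
      = c ^ 2 * s ^ 2 * (s⁻¹ * (((q - 3) / (q * (q + 3))) * A0)) := by
    rw [intervalIntegral.integral_const_mul,
      intervalIntegral.integral_comp_mul_left
        (fun y => (1/2) * (deriv k₀ y) ^ 2 - G (k₀ y)) hs.ne']
    rw [mul_zero, hsX, smul_eq_mul, hk_energy]
  -- the piece beyond Xhat vanishes
  have hzero : ∀ x ∈ Set.uIoc Xhat X,
      (1/2) * (deriv hhat x) ^ 2 - B * G (hhat x) = 0 := by
    intro x hx
    rw [Set.uIoc_of_le hXhat_le] at hx
    have hgt : Xhat < x := hx.1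
    have hev : hhat =ᶠ[nhds x] fun _ => (0:ℝ) := by
      filter_upwards [isOpen_Ioi.mem_nhds hgt] with y hy
      rw [hhat_def y, if_neg]
      intro hyc
      exact absurd hyc.2 (not_le.mpr hy)
    have hD : deriv hhat x = 0 := by rw [hev.deriv_eq, deriv_const]
    have hH : hhat x = 0 := by
      rw [hhat_def x, if_neg]
      intro h
      exact absurd h.2 (not_le.mpr hgt)
    rw [hD, hH, hG, Real.zero_rpow hq1n]
    simp
  have hFint2 : IntervalIntegrable
      (fun x => (1/2) * (deriv hhat x) ^ 2 - B * G (hhat x))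
      MeasureTheory.volume Xhat X :=
    (_root_.intervalIntegrable_const (c := (0:ℝ))).congr_ae
      ((MeasureTheory.ae_restrict_iff' measurableSet_uIoc).mpr
        (Filter.Eventually.of_forall fun x hx => (hzero x hx).symm))
  have key3 : (∫ x in Xhat..X, ((1/2) * (deriv hhat x) ^ 2 - B * G (hhat x))) = 0 := by
    rw [intervalIntegral.integral_congr_ae (g := fun _ => (0:ℝ))
      (Filter.Eventually.of_forall hzero)]
    simp
  have key : (∫ x in (0:ℝ)..X, ((1/2) * (deriv hhat x) ^ 2 - B * G (hhat x)))
      = c ^ 2 * s ^ 2 * (s⁻¹ * (((q - 3) / (q * (q + 3))) * A0)) := by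
    rw [← intervalIntegral.integral_add_adjacent_intervals hFint1 hFint2,
      key1, key2, key3, add_zero]
  have kconst : (∫ x in (0:ℝ)..X, ((0:ℝ) - B * G hbar))
      = X * (0 - B * (hbar ^ (q+1) / (q * (q+1)))) := by
    rw [intervalIntegral.integral_const, smul_eq_mul, hG hbar, sub_zero]
  -- Part 1
  have part1 : (∫ x in (0:ℝ)..X, ((1/2) * (deriv hhat x) ^ 2 - B * G (hhat x)))
        - (∫ x in (0:ℝ)..X, (0 - B * G hbar))
      = (1/q) * B ^ (3 / (3 - q)) * (hbar * X) ^ ((3 + q) / (3 - q)) *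
          (((q - 3) / (q + 3)) * A0 ^ (2 * q / (q - 3))
            + (1 / (q + 1)) * (B * hbar ^ (q - 1) * X ^ 2) ^ (q / (q - 3))) := by
    rw [key, kconst]
    have expand : (1/q) * B ^ (3 / (3 - q)) * (hbar * X) ^ ((3 + q) / (3 - q)) *
          (((q - 3) / (q + 3)) * A0 ^ (2 * q / (q - 3))
            + (1 / (q + 1)) * (B * hbar ^ (q - 1) * X ^ 2) ^ (q / (q - 3)))
        = ((q - 3) / (q + 3)) * ((1/q) *
            (B ^ (3 / (3 - q)) * (hbar * X) ^ ((3 + q) / (3 - q)) * A0 ^ (2 * q / (q - 3))))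
          + (1 / (q + 1)) * ((1/q) *
            (B ^ (3 / (3 - q)) * (hbar * X) ^ ((3 + q) / (3 - q)) *
              (B * hbar ^ (q - 1) * X ^ 2) ^ (q / (q - 3)))) := by
      ring
    rw [expand, ← E2pos, ← E3pos]
    field_simp
    ring
  refine ⟨part1, ?_⟩
  -- Part 2
  have hiff0 : ((∫ x in (0:ℝ)..X, (0 - B * G hbar))
        > (∫ x in (0:ℝ)..X, ((1/2) * (deriv hhat x) ^ 2 - B * G (hhat x))))
      ↔ (1/q) * B ^ (3 / (3 - q)) * (hbar * X) ^ ((3 + q) / (3 - q)) *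
          (((q - 3) / (q + 3)) * A0 ^ (2 * q / (q - 3))
            + (1 / (q + 1)) * (B * hbar ^ (q - 1) * X ^ 2) ^ (q / (q - 3))) < 0 := by
    constructor
    · intro h; linarith
    · intro h; linarith
  rw [hiff0]
  -- now pure rpow algebra
  set u : ℝ := q / (q - 3) with hu_def
  have hu : u ≠ 0 := div_ne_zero hq0 hq30
  set Y : ℝ := B * hbar ^ (q - 1) * X ^ 2 with hY_def
  have hY : 0 < Y := hYpos
  have hA02 : (0:ℝ) < A0 ^ (2:ℝ) := by positivity
  set Z : ℝ := Y / A0 ^ (2:ℝ) with hZ_def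
  have hZ : 0 < Z := div_pos hY hA02
  set K : ℝ := (3 + q) / ((3 - q) * (q + 1)) with hK_def
  have hK : 0 < K := div_pos (by linarith) (mul_pos h3qp hq1p)
  have fe3 : A0 ^ (2 * q / (q - 3)) = (A0 ^ (2:ℝ)) ^ u := by
    rw [← Real.rpow_mul hA0.le]
    congr 1
    rw [hu_def]; ring
  have fe4 : Y ^ u = Z ^ u * (A0 ^ (2:ℝ)) ^ u := by
    rw [← Real.mul_rpow hZ.le hA02.le, hZ_def, div_mul_cancel₀ _ hA02.ne']
  have hfact : (1/q) * B ^ (3 / (3 - q)) * (hbar * X) ^ ((3 + q) / (3 - q)) *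
        (((q - 3) / (q + 3)) * A0 ^ (2 * q / (q - 3))
          + (1 / (q + 1)) * Y ^ u)
      = (B ^ (3 / (3 - q)) * (hbar * X) ^ ((3 + q) / (3 - q)) * (A0 ^ (2:ℝ)) ^ u) *
          ((1/q) * ((q - 3) / (q + 3) + (1 / (q + 1)) * Z ^ u)) := by
    rw [fe3, fe4]; ring
  have hCA : (0:ℝ) < B ^ (3 / (3 - q)) * (hbar * X) ^ ((3 + q) / (3 - q)) *
      (A0 ^ (2:ℝ)) ^ u := by positivity
  have hNid : (q - 3) / (q + 3) + (1 / (q + 1)) * Z ^ u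
      = ((3 - q) / (3 + q)) * (K * Z ^ u - 1) := by
    rw [hK_def]
    have h3q' : (3:ℝ) + q ≠ 0 := by linarith
    field_simp
    ring
  have hKW : K * Z ^ u = (K ^ (1/u) * Z) ^ u := by
    rw [Real.mul_rpow (Real.rpow_pos_of_pos hK _).le hZ.le,
      ← Real.rpow_mul hK.le, one_div_mul_cancel hu, Real.rpow_one]
  have hW : 0 < K ^ (1/u) * Z := mul_pos (Real.rpow_pos_of_pos hK _) hZ
  have hWiff : (1 < K ^ (1/u) * Z) ↔
      (Y > A0 ^ (2:ℝ) * K ^ ((3 - q) / q)) := by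
    have h1u : (1:ℝ)/u = -((3 - q)/q) := by
      rw [hu_def]; field_simp; ring
    rw [h1u, Real.rpow_neg hK.le, hZ_def, ← div_eq_inv_mul,
      one_lt_div (Real.rpow_pos_of_pos hK _), lt_div_iff₀ hA02]
    constructor
    · intro h2
      rw [gt_iff_lt, mul_comm]
      exact h2
    · intro h2
      rw [mul_comm]
      exact h2
  have hmain : ((1/q) * ((q - 3) / (q + 3) + (1 / (q + 1)) * Z ^ u) < 0)
      ↔ (1 < K ^ (1/u) * Z) := by
    rcases lt_or_gt_of_ne hq0 with hqneg | hqpos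
    · -- q < 0 : u > 0
      have hq' : 1/q < 0 := one_div_neg.mpr hqneg
      have hupos : 0 < u := by
        rw [hu_def]; exact div_pos_of_neg_of_neg hqneg (by linarith)
      have step1 : ((1/q) * ((q - 3) / (q + 3) + (1 / (q + 1)) * Z ^ u) < 0)
          ↔ (0 < (q - 3) / (q + 3) + (1 / (q + 1)) * Z ^ u) := by
        constructor
        · intro h
          by_contra hn
          push_neg at hn
          have h2 : 0 ≤ (-(1/q)) * (-((q - 3) / (q + 3) + (1 / (q + 1)) * Z ^ u)) :=
            mul_nonneg (by linarith) (by linarith)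
          rw [neg_mul_neg] at h2
          exact absurd h2 (not_le.mpr h)
        · intro h; exact mul_neg_of_neg_of_pos hq' h
      rw [step1, hNid, aux_mul_pos_iff (div_pos h3qp (by linarith)), sub_pos, hKW,
        Real.one_lt_rpow_iff_of_pos hW]
      constructor
      · rintro (⟨h, _⟩ | ⟨_, hneg⟩)
        · exact h
        · exact absurd hupos (not_lt.mpr hneg.le)
      · intro h; exact Or.inl ⟨h, hupos⟩
    · -- q > 0 : u < 0
      have huneg : u < 0 := by
        rw [hu_def]; exact div_neg_of_pos_of_neg hqpos (by linarith)
      rw [aux_mul_neg_iff (by positivity : (0:ℝ) < 1/q), hNid,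
        aux_mul_neg_iff (div_pos h3qp (by linarith)), sub_neg, hKW,
        Real.rpow_lt_one_iff_of_pos hW]
      constructor
      · rintro (⟨h, _⟩ | ⟨_, hpos⟩)
        · exact h
        · exact absurd hpos (not_lt.mpr huneg.le)
      · intro h; exact Or.inl ⟨h, huneg⟩
  rw [hfact, aux_mul_neg_iff hCA, hmain, hWiff]
end

section
/- Define J(q) = (1/(4π²)) (2/q)(1+q) B(1/(2q), 1/2)^{3−q} B(3/(2q), 1/2)^{q−1}, where B(a,b) is the Euler Beta function. Then J(q) < 4 for all q ∈ (1, 1.75]. (It suffices to prove the two bounds: for 1 < q ≤ 1.5, J(q) ≤ (1/(4π²))·2·2.5·B(1/3, 1/2)² B(1, 1/2)^{1/2} < 4; for 1.5 < q ≤ 1.75, J(q) ≤ (1/(4π²))·(2/1.5)·2.75·B(2/7, 1/2)^{3/2} B(6/7, 1/2)^{3/4} < 4.) -/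
open Real intervalIntegral

/-- The Euler Beta function B(a,b) = ∫₀¹ t^(a−1)(1−t)^(b−1) dt. -/
noncomputable def betaFn (a b : ℝ) : ℝ :=
  ∫ t in (0:ℝ)..1, t ^ (a - 1) * (1 - t) ^ (b - 1)

/-- The quantity J(q) = (1/4π²)(2/q)(1+q) B(1/2q, 1/2)^{3−q} B(3/2q, 1/2)^{q−1}. -/
noncomputable def Jfun (q : ℝ) : ℝ :=
  (1 / (4 * Real.pi ^ 2)) * (2 / q) * (1 + q) *
    (betaFn (1 / (2 * q)) (1 / 2)) ^ (3 - q) *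
    (betaFn (3 / (2 * q)) (1 / 2)) ^ (q - 1)

open MeasureTheory Set

namespace JfunAux

/-- Numeric helper: `x ^ e ≤ y` provided `x ^ (e·n) ≤ yⁿ`. -/
lemma rpow_le_of_pow_le {x y e : ℝ} (hx : 0 ≤ x) (hy : 0 ≤ y) {n : ℕ} (hn : n ≠ 0)
    (h : x ^ (e * n) ≤ y ^ n) : x ^ e ≤ y := by
  refine le_of_pow_le_pow_left₀ hn hy ?_
  rwa [← Real.rpow_natCast (x ^ e) n, ← Real.rpow_mul hx]

lemma sqrt2_le : Real.sqrt 2 ≤ 1.41422 := by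
  rw [show (1.41422:ℝ) = Real.sqrt (1.41422^2) from (Real.sqrt_sq (by norm_num)).symm]
  exact Real.sqrt_le_sqrt (by norm_num)

lemma sqrt2_ge : (1.41421 : ℝ) ≤ Real.sqrt 2 := by
  rw [show (1.41421:ℝ) = Real.sqrt (1.41421^2) from (Real.sqrt_sq (by norm_num)).symm]
  exact Real.sqrt_le_sqrt (by norm_num)

/-- Integrability of `(1-t)^(-1/2)` on any interval. -/
lemma g_int (x y : ℝ) :
    IntervalIntegrable (fun t : ℝ => (1 - t) ^ ((1:ℝ)/2 - 1)) volume x y := by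
  have h := (intervalIntegrable_rpow' (a := 1 - x) (b := 1 - y)
    (by norm_num : (-1:ℝ) < 1/2 - 1)).comp_sub_left 1
  simpa using h

/-- Exact integral of `(1-t)^(-1/2)`. -/
lemma g_integral (x y : ℝ) :
    ∫ t in x..y, (1 - t) ^ ((1:ℝ)/2 - 1)
      = 2 * ((1 - x) ^ ((1:ℝ)/2) - (1 - y) ^ ((1:ℝ)/2)) := by
  rw [show (fun t : ℝ => (1 - t) ^ ((1:ℝ)/2 - 1))
      = (fun t : ℝ => ((fun s : ℝ => s ^ ((1:ℝ)/2 - 1)) (1 - t))) from rfl,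
    intervalIntegral.integral_comp_sub_left (fun s : ℝ => s ^ ((1:ℝ)/2 - 1)) 1,
    integral_rpow (Or.inl (by norm_num))]
  norm_num
  ring

lemma beta_meas (a x y : ℝ) :
    AEStronglyMeasurable (fun t : ℝ => t ^ (a-1) * (1 - t) ^ ((1:ℝ)/2 - 1))
      (volume.restrict (Set.uIoc x y)) := by
  exact ((measurable_id.pow measurable_const).mul
    ((measurable_const.sub measurable_id).pow measurable_const)).aestronglyMeasurable

/-- The beta integrand is interval integrable on [0,1] for `0 < a`. -/
lemma beta_intble {a : ℝ} (ha : 0 < a) :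
    IntervalIntegrable (fun t : ℝ => t ^ (a-1) * (1 - t) ^ ((1:ℝ)/2 - 1)) volume 0 1 := by
  have h1 : IntervalIntegrable (fun t : ℝ => t ^ (a-1) * (1 - t) ^ ((1:ℝ)/2 - 1))
      volume 0 (1/2) := by
    refine IntervalIntegrable.mono_fun'
      (g := fun t : ℝ => Real.sqrt 2 * t ^ (a-1)) ?_ (beta_meas a 0 (1/2)) ?_
    · exact (intervalIntegrable_rpow' (by linarith)).const_mul _
    · filter_upwards [ae_restrict_mem measurableSet_uIoc] with t ht
      rw [Set.uIoc_of_le (by norm_num : (0:ℝ) ≤ 1/2)] at ht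
      obtain ⟨ht0, ht1⟩ := ht
      have hnn : 0 ≤ t ^ (a-1) * (1 - t) ^ ((1:ℝ)/2 - 1) :=
        mul_nonneg (Real.rpow_nonneg ht0.le _) (Real.rpow_nonneg (by linarith) _)
      simp only [norm_eq_abs, abs_of_nonneg hnn]
      have h2 : (1 - t) ^ ((1:ℝ)/2 - 1) ≤ (1/2 : ℝ) ^ ((1:ℝ)/2 - 1) :=
        Real.rpow_le_rpow_of_nonpos (by norm_num) (by linarith) (by norm_num)
      have h3 : (1/2 : ℝ) ^ ((1:ℝ)/2 - 1) = Real.sqrt 2 := by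
        rw [show ((1:ℝ)/2 - 1) = -(1/2) by norm_num,
          Real.rpow_neg (by norm_num), ← Real.sqrt_eq_rpow,
          show (1/2:ℝ) = 2⁻¹ by norm_num, Real.sqrt_inv, inv_inv]
      rw [mul_comm (Real.sqrt 2)]
      exact mul_le_mul_of_nonneg_left (h3 ▸ h2) (Real.rpow_nonneg ht0.le _)
  have h2 : IntervalIntegrable (fun t : ℝ => t ^ (a-1) * (1 - t) ^ ((1:ℝ)/2 - 1))
      volume (1/2) 1 := by
    refine IntervalIntegrable.mono_fun'
      (g := fun t : ℝ => 2 * (1 - t) ^ ((1:ℝ)/2 - 1)) ?_ (beta_meas a (1/2) 1) ?_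
    · exact (g_int _ _).const_mul _
    · filter_upwards [ae_restrict_mem measurableSet_uIoc] with t ht
      rw [Set.uIoc_of_le (by norm_num : (1:ℝ)/2 ≤ 1)] at ht
      obtain ⟨ht0, ht1⟩ := ht
      have htpos : (0:ℝ) < t := by linarith
      have hnn : 0 ≤ t ^ (a-1) * (1 - t) ^ ((1:ℝ)/2 - 1) :=
        mul_nonneg (Real.rpow_nonneg htpos.le _) (Real.rpow_nonneg (by linarith) _)
      simp only [norm_eq_abs, abs_of_nonneg hnn]
      have h2 : t ^ (a-1) ≤ 2 := by
        rcases le_or_gt a 1 with hle | hgt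
        · calc t ^ (a-1) ≤ (1/2 : ℝ) ^ (a-1) :=
                Real.rpow_le_rpow_of_nonpos (by norm_num) ht0.le (by linarith)
            _ ≤ (1/2 : ℝ) ^ (-1 : ℝ) :=
                Real.rpow_le_rpow_of_exponent_ge (by norm_num) (by norm_num) (by linarith)
            _ = 2 := by
                rw [Real.rpow_neg_one]; norm_num
        · calc t ^ (a-1) ≤ 1 := Real.rpow_le_one htpos.le ht1 (by linarith)
            _ ≤ 2 := by norm_num
      exact mul_le_mul_of_nonneg_right h2 (Real.rpow_nonneg (by linarith) _)
  exact h1.trans h2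

lemma beta_intble_sub {a : ℝ} (ha : 0 < a) {x y : ℝ} (hx : x ∈ Icc (0:ℝ) 1)
    (hy : y ∈ Icc (0:ℝ) 1) :
    IntervalIntegrable (fun t : ℝ => t ^ (a-1) * (1 - t) ^ ((1:ℝ)/2 - 1)) volume x y :=
  (beta_intble ha).mono_set (by
    rw [Set.uIcc_of_le (by norm_num : (0:ℝ) ≤ 1)]
    exact Set.uIcc_subset_Icc hx hy)

lemma betaFn_half (a : ℝ) :
    betaFn a (1/2) = ∫ t in (0:ℝ)..1, t ^ (a-1) * (1 - t) ^ ((1:ℝ)/2 - 1) := rfl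

/-- Lower bound: `1 ≤ B(a, 1/2)` for `0 < a ≤ 3/2`. -/
lemma one_le_beta {a : ℝ} (ha : 0 < a) (ha' : a ≤ 3/2) : 1 ≤ betaFn a (1/2) := by
  rw [betaFn_half]
  rw [← intervalIntegral.integral_add_adjacent_intervals (b := (1:ℝ)/2)
    (beta_intble_sub ha (by norm_num) (by norm_num))
    (beta_intble_sub ha (by norm_num) (by norm_num))]
  have hfirst : 0 ≤ ∫ t in (0:ℝ)..(1/2), t ^ (a-1) * (1 - t) ^ ((1:ℝ)/2 - 1) := by
    refine intervalIntegral.integral_nonneg (by norm_num) ?_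
    intro t ht
    exact mul_nonneg (Real.rpow_nonneg ht.1 _) (Real.rpow_nonneg (by linarith [ht.2]) _)
  have hsecond : 1 ≤ ∫ t in ((1:ℝ)/2)..1, t ^ (a-1) * (1 - t) ^ ((1:ℝ)/2 - 1) := by
    have hmono : ∫ t in ((1:ℝ)/2)..1,
        (1/2:ℝ) ^ ((1:ℝ)/2) * (1 - t) ^ ((1:ℝ)/2 - 1)
        ≤ ∫ t in ((1:ℝ)/2)..1, t ^ (a-1) * (1 - t) ^ ((1:ℝ)/2 - 1) := by
      refine intervalIntegral.integral_mono_on (by norm_num)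
        ((g_int _ _).const_mul _)
        (beta_intble_sub ha (by norm_num) (by norm_num)) ?_
      intro t ht
      obtain ⟨ht0, ht1⟩ := ht
      have htpos : (0:ℝ) < t := by linarith
      refine mul_le_mul_of_nonneg_right ?_ (Real.rpow_nonneg (by linarith) _)
      rcases le_or_gt 0 (a - 1) with hnn | hneg
      · calc (1/2:ℝ) ^ ((1:ℝ)/2) ≤ (1/2:ℝ) ^ (a-1) :=
              Real.rpow_le_rpow_of_exponent_ge (by norm_num) (by norm_num) (by linarith)
          _ ≤ t ^ (a-1) := Real.rpow_le_rpow (by norm_num) ht0 hnn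
      · calc (1/2:ℝ) ^ ((1:ℝ)/2) ≤ 1 :=
              Real.rpow_le_one (by norm_num) (by norm_num) (by norm_num)
          _ = (1:ℝ) ^ (a-1) := (Real.one_rpow _).symm
          _ ≤ t ^ (a-1) := Real.rpow_le_rpow_of_nonpos htpos ht1 hneg.le
    refine le_trans ?_ hmono
    rw [intervalIntegral.integral_const_mul, g_integral]
    rw [show (1:ℝ) - 1 = 0 by norm_num, Real.zero_rpow (by norm_num),
      show (1:ℝ) - 1/2 = 1/2 by norm_num]
    have hsq : (1/2:ℝ) ^ ((1:ℝ)/2) * (1/2:ℝ) ^ ((1:ℝ)/2) = 1/2 := by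
      rw [← Real.rpow_add (by norm_num)]; norm_num
    nlinarith [hsq]
  linarith

/-- Upper bound `B(a,1/2) ≤ 2` for `1 ≤ a`. -/
lemma beta_le_two {a : ℝ} (ha : 1 ≤ a) : betaFn a (1/2) ≤ 2 := by
  rw [betaFn_half]
  have hmono : ∫ t in (0:ℝ)..1, t ^ (a-1) * (1 - t) ^ ((1:ℝ)/2 - 1)
      ≤ ∫ t in (0:ℝ)..1, (1 - t) ^ ((1:ℝ)/2 - 1) := by
    refine intervalIntegral.integral_mono_on (by norm_num)
      (beta_intble (by linarith)) (g_int _ _) ?_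
    intro t ht
    have h1 : t ^ (a-1) ≤ 1 := Real.rpow_le_one ht.1 ht.2 (by linarith)
    exact mul_le_of_le_one_left (Real.rpow_nonneg (by linarith [ht.2]) _) h1
  refine hmono.trans ?_
  rw [g_integral, show (1:ℝ) - 1 = 0 by norm_num, Real.zero_rpow (by norm_num)]
  norm_num

/-- Monotonicity: `B(a,1/2) ≤ B(a',1/2)` for `0 < a' ≤ a < 1`. -/
lemma beta_mono {a a' : ℝ} (ha' : 0 < a') (haa : a' ≤ a) (ha1 : a < 1) :
    betaFn a (1/2) ≤ betaFn a' (1/2) := by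
  rw [betaFn_half, betaFn_half]
  refine intervalIntegral.integral_mono_on (by norm_num)
    (beta_intble (by linarith)) (beta_intble ha') ?_
  intro t ht
  refine mul_le_mul_of_nonneg_right ?_ (Real.rpow_nonneg (by linarith [ht.2]) _)
  rcases eq_or_lt_of_le ht.1 with h0 | hpos
  · rw [← h0, Real.zero_rpow (by linarith), Real.zero_rpow (by linarith)]
  · exact Real.rpow_le_rpow_of_exponent_ge hpos ht.2 (by linarith)

/-- The chord bound `(1-t)^(-1/2) ≤ 1 + 2(√2-1)t` on `[0, 1/2]`. -/
lemma chord {t : ℝ} (ht0 : 0 ≤ t) (ht1 : t ≤ 1/2) :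
    (1 - t) ^ ((1:ℝ)/2 - 1) ≤ 1 + 2*(Real.sqrt 2 - 1)*t := by
  set c : ℝ := 2*(Real.sqrt 2 - 1) with hc
  have hs2 : Real.sqrt 2 ^ 2 = 2 := Real.sq_sqrt (by norm_num)
  have hs2ge : (1.41421:ℝ) ≤ Real.sqrt 2 := sqrt2_ge
  have hcquad : c^2 + 4*c - 4 = 0 := by rw [hc]; nlinarith [hs2]
  have hcge : (0.82842:ℝ) ≤ c := by rw [hc]; linarith
  have hcpos : 0 < 1 + c * t := by nlinarith
  have hu : (0:ℝ) < 1 - t := by linarith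
  have hprod : 0 ≤ t * (1/2 - t) * (c^2*t + (4*c - 2)) := by
    have : (0:ℝ) ≤ c^2*t + (4*c - 2) := by nlinarith [sq_nonneg c]
    have h12 : (0:ℝ) ≤ 1/2 - t := by linarith
    positivity
  have hkey : 1 ≤ (1 + c*t)^2 * (1 - t) := by nlinarith [hprod, hcquad, sq_nonneg t]
  have hupos : 0 < (1 - t) ^ ((1:ℝ)/2) := Real.rpow_pos_of_pos hu _
  have hsq : ((1 - t) ^ ((1:ℝ)/2)) * ((1 - t) ^ ((1:ℝ)/2)) = 1 - t := by
    rw [← Real.rpow_add hu]; norm_num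
  have h1 : 1 ≤ (1 + c*t) * (1 - t) ^ ((1:ℝ)/2) := by
    nlinarith [mul_pos hcpos hupos, hsq, hkey]
  have h2 : (1 - t) ^ ((1:ℝ)/2 - 1) * (1 - t) ^ ((1:ℝ)/2) = 1 := by
    rw [← Real.rpow_add hu]; norm_num
  calc (1 - t) ^ ((1:ℝ)/2 - 1) = 1 / (1 - t) ^ ((1:ℝ)/2) :=
        eq_one_div_of_mul_eq_one_left h2
    _ ≤ 1 + c*t := by
        rw [div_le_iff₀ hupos]
        linarith [h1]

/-- General upper bound for `B(a,1/2)`, `0 < a < 1`. -/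
lemma beta_upper {a : ℝ} (ha : 0 < a) (ha1 : a < 1) :
    betaFn a (1/2) ≤ (1/2:ℝ)^a / a + 2*(Real.sqrt 2 - 1) * (1/2:ℝ)^(a+1) / (a+1)
      + (1/2:ℝ)^(a-1) * (2 * (1/2:ℝ)^((1:ℝ)/2) - 1) + (3/4:ℝ)^(a-1) := by
  rw [betaFn_half]
  have i01 := beta_intble_sub (x := 0) (y := 1/2) ha (by norm_num) (by norm_num)
  have i12 := beta_intble_sub (x := 1/2) (y := 3/4) ha (by norm_num) (by norm_num)
  have i23 := beta_intble_sub (x := 3/4) (y := 1) ha (by norm_num) (by norm_num)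
  rw [← intervalIntegral.integral_add_adjacent_intervals i01 (i12.trans i23),
    ← intervalIntegral.integral_add_adjacent_intervals i12 i23]
  have hq4 : ((1:ℝ)/4) ^ ((1:ℝ)/2) = 1/2 := by
    rw [← Real.sqrt_eq_rpow, show (1/4:ℝ) = (1/2)^2 by norm_num, Real.sqrt_sq (by norm_num)]
  have hP1 : ∫ t in (0:ℝ)..(1/2), t ^ (a-1) * (1 - t) ^ ((1:ℝ)/2 - 1)
      ≤ (1/2:ℝ)^a / a + 2*(Real.sqrt 2 - 1) * (1/2:ℝ)^(a+1) / (a+1) := by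
    have hmono : ∫ t in (0:ℝ)..(1/2), t ^ (a-1) * (1 - t) ^ ((1:ℝ)/2 - 1)
        ≤ ∫ t in (0:ℝ)..(1/2), (t ^ (a-1) + 2*(Real.sqrt 2 - 1) * t ^ a) := by
      refine intervalIntegral.integral_mono_on (by norm_num) i01
        ((intervalIntegrable_rpow' (by linarith)).add
          (((intervalIntegrable_rpow' (by linarith)).const_mul _))) ?_
      intro t ht
      obtain ⟨ht0, ht1⟩ := ht
      have hch := chord ht0 ht1
      have hta : t ^ (a-1) * t = t ^ a := by
        rcases eq_or_lt_of_le ht0 with h0 | hpos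
        · rw [← h0, Real.zero_rpow (by linarith), Real.zero_rpow (by linarith), zero_mul]
        · nth_rewrite 2 [← Real.rpow_one t]
          rw [← Real.rpow_add hpos]
          norm_num
      calc t ^ (a-1) * (1 - t) ^ ((1:ℝ)/2 - 1)
          ≤ t ^ (a-1) * (1 + 2*(Real.sqrt 2 - 1)*t) :=
            mul_le_mul_of_nonneg_left hch (Real.rpow_nonneg ht0 _)
        _ = t ^ (a-1) + 2*(Real.sqrt 2 - 1) * t ^ a := by
            rw [mul_add, mul_one, ← hta]; ring
    refine hmono.trans (le_of_eq ?_)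
    rw [intervalIntegral.integral_add (intervalIntegrable_rpow' (by linarith))
        ((intervalIntegrable_rpow' (by linarith)).const_mul _),
      intervalIntegral.integral_const_mul, integral_rpow (Or.inl (by linarith)),
      integral_rpow (Or.inl (by linarith)),
      Real.zero_rpow (by linarith), Real.zero_rpow (by linarith),
      show a - 1 + 1 = a by ring]
    field_simp
    ring
  have hP2 : ∫ t in ((1:ℝ)/2)..(3/4), t ^ (a-1) * (1 - t) ^ ((1:ℝ)/2 - 1)
      ≤ (1/2:ℝ)^(a-1) * (2 * (1/2:ℝ)^((1:ℝ)/2) - 1) := by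
    have hmono : ∫ t in ((1:ℝ)/2)..(3/4), t ^ (a-1) * (1 - t) ^ ((1:ℝ)/2 - 1)
        ≤ ∫ t in ((1:ℝ)/2)..(3/4), (1/2:ℝ)^(a-1) * (1 - t) ^ ((1:ℝ)/2 - 1) := by
      refine intervalIntegral.integral_mono_on (by norm_num) i12
        ((g_int _ _).const_mul _) ?_
      intro t ht
      refine mul_le_mul_of_nonneg_right ?_ (Real.rpow_nonneg (by linarith [ht.2]) _)
      exact Real.rpow_le_rpow_of_nonpos (by norm_num) ht.1 (by linarith)
    refine hmono.trans (le_of_eq ?_)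
    rw [intervalIntegral.integral_const_mul, g_integral,
      show (1:ℝ) - 1/2 = 1/2 by norm_num, show (1:ℝ) - 3/4 = 1/4 by norm_num, hq4]
    ring
  have hP3 : ∫ t in ((3:ℝ)/4)..1, t ^ (a-1) * (1 - t) ^ ((1:ℝ)/2 - 1)
      ≤ (3/4:ℝ)^(a-1) := by
    have hmono : ∫ t in ((3:ℝ)/4)..1, t ^ (a-1) * (1 - t) ^ ((1:ℝ)/2 - 1)
        ≤ ∫ t in ((3:ℝ)/4)..1, (3/4:ℝ)^(a-1) * (1 - t) ^ ((1:ℝ)/2 - 1) := by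
      refine intervalIntegral.integral_mono_on (by norm_num) i23
        ((g_int _ _).const_mul _) ?_
      intro t ht
      refine mul_le_mul_of_nonneg_right ?_ (Real.rpow_nonneg (by linarith [ht.2]) _)
      exact Real.rpow_le_rpow_of_nonpos (by norm_num) ht.1 (by linarith)
    refine hmono.trans (le_of_eq ?_)
    rw [intervalIntegral.integral_const_mul, g_integral,
      show (1:ℝ) - 3/4 = 1/4 by norm_num, show (1:ℝ) - 1 = 0 by norm_num,
      Real.zero_rpow (by norm_num), hq4]
    ring
  linarith

lemma s_le : (1/2:ℝ)^((1:ℝ)/2) ≤ 0.707107 := by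
  refine rpow_le_of_pow_le (by norm_num) (by norm_num) (n := 2) (by norm_num) ?_
  rw [show ((1:ℝ)/2 * ((2:ℕ):ℝ)) = 1 by push_cast; ring, Real.rpow_one]
  norm_num

lemma s_ge : (1/2:ℝ) ≤ (1/2:ℝ)^((1:ℝ)/2) := by
  calc (1/2:ℝ) = (1/2:ℝ)^(1:ℝ) := (Real.rpow_one _).symm
    _ ≤ (1/2:ℝ)^((1:ℝ)/2) :=
      Real.rpow_le_rpow_of_exponent_ge (by norm_num) (by norm_num) (by norm_num)

/-- Numeric bound `B(1/3, 1/2) ≤ 4.498`. -/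
lemma B13 : betaFn (1/3 : ℝ) (1/2) ≤ 4.498 := by
  refine (beta_upper (by norm_num) (by norm_num)).trans ?_
  have e1 : (1/2:ℝ)^((1:ℝ)/3) ≤ 0.794 := by
    refine rpow_le_of_pow_le (by norm_num) (by norm_num) (n := 3) (by norm_num) ?_
    rw [show ((1:ℝ)/3 * ((3:ℕ):ℝ)) = 1 by push_cast; ring, Real.rpow_one]
    norm_num
  have e2 : (1/2:ℝ)^((1:ℝ)/3 + 1) ≤ 0.397 := by
    refine rpow_le_of_pow_le (by norm_num) (by norm_num) (n := 3) (by norm_num) ?_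
    rw [show (((1:ℝ)/3 + 1) * ((3:ℕ):ℝ)) = ((4:ℕ):ℝ) by push_cast; ring, Real.rpow_natCast]
    norm_num
  have e3 : (1/2:ℝ)^((1:ℝ)/3 - 1) ≤ 1.588 := by
    refine rpow_le_of_pow_le (by norm_num) (by norm_num) (n := 3) (by norm_num) ?_
    rw [show (((1:ℝ)/3 - 1) * ((3:ℕ):ℝ)) = ((-2:ℤ):ℝ) by push_cast; ring, Real.rpow_intCast]
    norm_num
  have e4 : (3/4:ℝ)^((1:ℝ)/3 - 1) ≤ 1.2115 := by
    refine rpow_le_of_pow_le (by norm_num) (by norm_num) (n := 3) (by norm_num) ?_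
    rw [show (((1:ℝ)/3 - 1) * ((3:ℕ):ℝ)) = ((-2:ℤ):ℝ) by push_cast; ring, Real.rpow_intCast]
    norm_num
  have hc : 2*(Real.sqrt 2 - 1) ≤ 0.82844 := by linarith [sqrt2_le]
  have hc0 : (0:ℝ) ≤ 2*(Real.sqrt 2 - 1) := by linarith [sqrt2_ge]
  have he20 : (0:ℝ) ≤ (1/2:ℝ)^((1:ℝ)/3 + 1) := Real.rpow_nonneg (by norm_num) _
  have he30 : (0:ℝ) ≤ (1/2:ℝ)^((1:ℝ)/3 - 1) := Real.rpow_nonneg (by norm_num) _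
  have hs : 2 * (1/2:ℝ)^((1:ℝ)/2) - 1 ≤ 0.414214 := by linarith [s_le]
  have hs0 : (0:ℝ) ≤ 2 * (1/2:ℝ)^((1:ℝ)/2) - 1 := by linarith [s_ge]
  have hp1 : 2*(Real.sqrt 2 - 1) * (1/2:ℝ)^((1:ℝ)/3 + 1) ≤ 0.82844 * 0.397 :=
    mul_le_mul hc e2 he20 (by norm_num)
  have hp2 : (1/2:ℝ)^((1:ℝ)/3 - 1) * (2 * (1/2:ℝ)^((1:ℝ)/2) - 1) ≤ 1.588 * 0.414214 :=
    mul_le_mul e3 hs hs0 (by norm_num)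
  ring_nf
  nlinarith [hp1, hp2, e1, e4]

/-- Numeric bound `B(2/7, 1/2) ≤ 5.045`. -/
lemma B27 : betaFn (2/7 : ℝ) (1/2) ≤ 5.045 := by
  refine (beta_upper (by norm_num) (by norm_num)).trans ?_
  have e1 : (1/2:ℝ)^((2:ℝ)/7) ≤ 0.8206 := by
    refine rpow_le_of_pow_le (by norm_num) (by norm_num) (n := 7) (by norm_num) ?_
    rw [show ((2:ℝ)/7 * ((7:ℕ):ℝ)) = ((2:ℕ):ℝ) by push_cast; ring, Real.rpow_natCast]
    norm_num
  have e2 : (1/2:ℝ)^((2:ℝ)/7 + 1) ≤ 0.4103 := by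
    refine rpow_le_of_pow_le (by norm_num) (by norm_num) (n := 7) (by norm_num) ?_
    rw [show (((2:ℝ)/7 + 1) * ((7:ℕ):ℝ)) = ((9:ℕ):ℝ) by push_cast; ring, Real.rpow_natCast]
    norm_num
  have e3 : (1/2:ℝ)^((2:ℝ)/7 - 1) ≤ 1.641 := by
    refine rpow_le_of_pow_le (by norm_num) (by norm_num) (n := 7) (by norm_num) ?_
    rw [show (((2:ℝ)/7 - 1) * ((7:ℕ):ℝ)) = ((-5:ℤ):ℝ) by push_cast; ring, Real.rpow_intCast]
    norm_num
  have e4 : (3/4:ℝ)^((2:ℝ)/7 - 1) ≤ 1.2285 := by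
    refine rpow_le_of_pow_le (by norm_num) (by norm_num) (n := 7) (by norm_num) ?_
    rw [show (((2:ℝ)/7 - 1) * ((7:ℕ):ℝ)) = ((-5:ℤ):ℝ) by push_cast; ring, Real.rpow_intCast]
    norm_num
  have hc : 2*(Real.sqrt 2 - 1) ≤ 0.82844 := by linarith [sqrt2_le]
  have hc0 : (0:ℝ) ≤ 2*(Real.sqrt 2 - 1) := by linarith [sqrt2_ge]
  have he20 : (0:ℝ) ≤ (1/2:ℝ)^((2:ℝ)/7 + 1) := Real.rpow_nonneg (by norm_num) _
  have hs : 2 * (1/2:ℝ)^((1:ℝ)/2) - 1 ≤ 0.414214 := by linarith [s_le]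
  have hs0 : (0:ℝ) ≤ 2 * (1/2:ℝ)^((1:ℝ)/2) - 1 := by linarith [s_ge]
  have hp1 : 2*(Real.sqrt 2 - 1) * (1/2:ℝ)^((2:ℝ)/7 + 1) ≤ 0.82844 * 0.4103 :=
    mul_le_mul hc e2 he20 (by norm_num)
  have hp2 : (1/2:ℝ)^((2:ℝ)/7 - 1) * (2 * (1/2:ℝ)^((1:ℝ)/2) - 1) ≤ 1.641 * 0.414214 :=
    mul_le_mul e3 hs hs0 (by norm_num)
  ring_nf
  nlinarith [hp1, hp2, e1, e4]

/-- Numeric bound `B(6/7, 1/2) ≤ 2.267`. -/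
lemma B67 : betaFn (6/7 : ℝ) (1/2) ≤ 2.267 := by
  refine (beta_upper (by norm_num) (by norm_num)).trans ?_
  have e1 : (1/2:ℝ)^((6:ℝ)/7) ≤ 0.5523 := by
    refine rpow_le_of_pow_le (by norm_num) (by norm_num) (n := 7) (by norm_num) ?_
    rw [show ((6:ℝ)/7 * ((7:ℕ):ℝ)) = ((6:ℕ):ℝ) by push_cast; ring, Real.rpow_natCast]
    norm_num
  have e2 : (1/2:ℝ)^((6:ℝ)/7 + 1) ≤ 0.27615 := by
    refine rpow_le_of_pow_le (by norm_num) (by norm_num) (n := 7) (by norm_num) ?_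
    rw [show (((6:ℝ)/7 + 1) * ((7:ℕ):ℝ)) = ((13:ℕ):ℝ) by push_cast; ring, Real.rpow_natCast]
    norm_num
  have e3 : (1/2:ℝ)^((6:ℝ)/7 - 1) ≤ 1.1042 := by
    refine rpow_le_of_pow_le (by norm_num) (by norm_num) (n := 7) (by norm_num) ?_
    rw [show (((6:ℝ)/7 - 1) * ((7:ℕ):ℝ)) = ((-1:ℤ):ℝ) by push_cast; ring, Real.rpow_intCast]
    norm_num
  have e4 : (3/4:ℝ)^((6:ℝ)/7 - 1) ≤ 1.042 := by
    refine rpow_le_of_pow_le (by norm_num) (by norm_num) (n := 7) (by norm_num) ?_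
    rw [show (((6:ℝ)/7 - 1) * ((7:ℕ):ℝ)) = ((-1:ℤ):ℝ) by push_cast; ring, Real.rpow_intCast]
    norm_num
  have hc : 2*(Real.sqrt 2 - 1) ≤ 0.82844 := by linarith [sqrt2_le]
  have hc0 : (0:ℝ) ≤ 2*(Real.sqrt 2 - 1) := by linarith [sqrt2_ge]
  have he20 : (0:ℝ) ≤ (1/2:ℝ)^((6:ℝ)/7 + 1) := Real.rpow_nonneg (by norm_num) _
  have hs : 2 * (1/2:ℝ)^((1:ℝ)/2) - 1 ≤ 0.414214 := by linarith [s_le]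
  have hs0 : (0:ℝ) ≤ 2 * (1/2:ℝ)^((1:ℝ)/2) - 1 := by linarith [s_ge]
  have hp1 : 2*(Real.sqrt 2 - 1) * (1/2:ℝ)^((6:ℝ)/7 + 1) ≤ 0.82844 * 0.27615 :=
    mul_le_mul hc e2 he20 (by norm_num)
  have hp2 : (1/2:ℝ)^((6:ℝ)/7 - 1) * (2 * (1/2:ℝ)^((1:ℝ)/2) - 1) ≤ 1.1042 * 0.414214 :=
    mul_le_mul e3 hs hs0 (by norm_num)
  ring_nf
  nlinarith [hp1, hp2, e1, e4]

end JfunAux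

set_option maxHeartbeats 1000000 in
open JfunAux in
/-- J(q) < 4 for all q ∈ (1, 1.75]. -/
theorem Jfun_lt_four (q : ℝ) (hq1 : 1 < q) (hq2 : q ≤ 1.75) : Jfun q < 4 := by
  have hq0 : (0:ℝ) < q := by linarith
  have hq2' : q ≤ 7/4 := by norm_num at hq2 ⊢; linarith
  have ha1pos : (0:ℝ) < 1 / (2*q) := by positivity
  have ha3pos : (0:ℝ) < 3 / (2*q) := by positivity
  have ha1lt : 1 / (2*q) < 1 := by rw [div_lt_one (by positivity)]; linarith
  have hB1ge : 1 ≤ betaFn (1 / (2*q)) (1/2) :=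
    one_le_beta ha1pos (by rw [div_le_iff₀ (by positivity)]; nlinarith)
  have hB3ge : 1 ≤ betaFn (3 / (2*q)) (1/2) :=
    one_le_beta ha3pos (by rw [div_le_iff₀ (by positivity)]; nlinarith)
  have hB1ge0 : (0:ℝ) ≤ betaFn (1 / (2*q)) (1/2) := by linarith
  have hB3ge0 : (0:ℝ) ≤ betaFn (3 / (2*q)) (1/2) := by linarith
  have hXpos : (0:ℝ) ≤ (betaFn (1 / (2*q)) (1/2)) ^ (3 - q) := Real.rpow_nonneg hB1ge0 _
  have hYpos : (0:ℝ) ≤ (betaFn (3 / (2*q)) (1/2)) ^ (q - 1) := Real.rpow_nonneg hB3ge0 _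
  have hpi := Real.pi_gt_d6
  have hpi0 := Real.pi_pos
  rcases le_or_gt q 1.5 with hq15 | hq15
  · -- Case 1 < q ≤ 1.5
    have hq15' : q ≤ 3/2 := by norm_num at hq15 ⊢; linarith
    have hB1le : betaFn (1 / (2*q)) (1/2) ≤ 4.498 := by
      refine (beta_mono (by norm_num) ?_ ha1lt).trans B13
      rw [div_le_div_iff₀ (by norm_num) (by positivity)]; linarith
    have hB3le : betaFn (3 / (2*q)) (1/2) ≤ 2 :=
      beta_le_two (by rw [le_div_iff₀ (by positivity)]; linarith)
    have hX : (betaFn (1 / (2*q)) (1/2)) ^ (3 - q) ≤ 20.233 := by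
      calc (betaFn (1 / (2*q)) (1/2)) ^ (3 - q)
          ≤ (betaFn (1 / (2*q)) (1/2)) ^ (2:ℝ) :=
            Real.rpow_le_rpow_of_exponent_le hB1ge (by linarith)
        _ ≤ (4.498:ℝ) ^ (2:ℝ) := Real.rpow_le_rpow hB1ge0 hB1le (by norm_num)
        _ ≤ 20.233 := by
            rw [show (2:ℝ) = ((2:ℕ):ℝ) by norm_num, Real.rpow_natCast]
            norm_num
    have hY : (betaFn (3 / (2*q)) (1/2)) ^ (q - 1) ≤ 1.41422 := by
      calc (betaFn (3 / (2*q)) (1/2)) ^ (q - 1)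
          ≤ (betaFn (3 / (2*q)) (1/2)) ^ ((1:ℝ)/2) :=
            Real.rpow_le_rpow_of_exponent_le hB3ge (by linarith)
        _ ≤ (2:ℝ) ^ ((1:ℝ)/2) := Real.rpow_le_rpow hB3ge0 hB3le (by norm_num)
        _ ≤ 1.41422 := by
            refine rpow_le_of_pow_le (by norm_num) (by norm_num) (n := 2) (by norm_num) ?_
            rw [show ((1:ℝ)/2 * ((2:ℕ):ℝ)) = 1 by push_cast; ring, Real.rpow_one]
            norm_num
    have hcq : (2/q) * (1+q) ≤ 5 := by
      have h1 : 2/q ≤ 2 := by rw [div_le_iff₀ hq0]; linarith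
      have h2 : 1+q ≤ 5/2 := by linarith
      have h10 : (0:ℝ) ≤ 2/q := by positivity
      nlinarith
    have hrw : Jfun q = (1 / (4 * Real.pi ^ 2)) *
        ((2/q) * (1+q) * ((betaFn (1 / (2*q)) (1/2)) ^ (3 - q)
          * (betaFn (3 / (2*q)) (1/2)) ^ (q - 1))) := by
      unfold Jfun; ring
    have hB : (2/q) * (1+q) * ((betaFn (1 / (2*q)) (1/2)) ^ (3 - q)
          * (betaFn (3 / (2*q)) (1/2)) ^ (q - 1)) ≤ 5 * (20.233 * 1.41422) := by
      refine mul_le_mul hcq (mul_le_mul hX hY hYpos (by norm_num))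
        (mul_nonneg hXpos hYpos) (by norm_num)
    rw [hrw]
    calc (1 / (4 * Real.pi ^ 2)) *
        ((2/q) * (1+q) * ((betaFn (1 / (2*q)) (1/2)) ^ (3 - q)
          * (betaFn (3 / (2*q)) (1/2)) ^ (q - 1)))
        ≤ (1 / (4 * Real.pi ^ 2)) * (5 * (20.233 * 1.41422)) :=
          mul_le_mul_of_nonneg_left hB (by positivity)
      _ < 4 := by
          rw [div_mul_eq_mul_div, one_mul, div_lt_iff₀ (by positivity)]
          nlinarith [hpi]
  · -- Case 1.5 < q ≤ 1.75
    have hq15' : 3/2 < q := by norm_num at hq15 ⊢; linarith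
    have hB1le : betaFn (1 / (2*q)) (1/2) ≤ 5.045 := by
      refine (beta_mono (by norm_num) ?_ ha1lt).trans B27
      rw [div_le_div_iff₀ (by norm_num) (by positivity)]; linarith
    have hB3le : betaFn (3 / (2*q)) (1/2) ≤ 2.267 := by
      refine (beta_mono (by norm_num) ?_ ?_).trans B67
      · rw [div_le_div_iff₀ (by norm_num) (by positivity)]; linarith
      · rw [div_lt_one (by positivity)]; linarith
    have hX : (betaFn (1 / (2*q)) (1/2)) ^ (3 - q) ≤ 11.34 := by
      calc (betaFn (1 / (2*q)) (1/2)) ^ (3 - q)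
          ≤ (betaFn (1 / (2*q)) (1/2)) ^ ((3:ℝ)/2) :=
            Real.rpow_le_rpow_of_exponent_le hB1ge (by linarith)
        _ ≤ (5.045:ℝ) ^ ((3:ℝ)/2) := Real.rpow_le_rpow hB1ge0 hB1le (by norm_num)
        _ ≤ 11.34 := by
            refine rpow_le_of_pow_le (by norm_num) (by norm_num) (n := 2) (by norm_num) ?_
            rw [show ((3:ℝ)/2 * ((2:ℕ):ℝ)) = ((3:ℕ):ℝ) by push_cast; ring, Real.rpow_natCast]
            norm_num
    have hY : (betaFn (3 / (2*q)) (1/2)) ^ (q - 1) ≤ 1.85 := by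
      calc (betaFn (3 / (2*q)) (1/2)) ^ (q - 1)
          ≤ (betaFn (3 / (2*q)) (1/2)) ^ ((3:ℝ)/4) :=
            Real.rpow_le_rpow_of_exponent_le hB3ge (by linarith)
        _ ≤ (2.267:ℝ) ^ ((3:ℝ)/4) := Real.rpow_le_rpow hB3ge0 hB3le (by norm_num)
        _ ≤ 1.85 := by
            refine rpow_le_of_pow_le (by norm_num) (by norm_num) (n := 4) (by norm_num) ?_
            rw [show ((3:ℝ)/4 * ((4:ℕ):ℝ)) = ((3:ℕ):ℝ) by push_cast; ring, Real.rpow_natCast]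
            norm_num
    have hcq : (2/q) * (1+q) ≤ (4/3) * (11/4) := by
      have h1 : 2/q ≤ 4/3 := by rw [div_le_div_iff₀ hq0 (by norm_num)]; linarith
      have h2 : 1+q ≤ 11/4 := by linarith
      have h10 : (0:ℝ) ≤ 2/q := by positivity
      nlinarith
    have hrw : Jfun q = (1 / (4 * Real.pi ^ 2)) *
        ((2/q) * (1+q) * ((betaFn (1 / (2*q)) (1/2)) ^ (3 - q)
          * (betaFn (3 / (2*q)) (1/2)) ^ (q - 1))) := by
      unfold Jfun; ring
    have hB : (2/q) * (1+q) * ((betaFn (1 / (2*q)) (1/2)) ^ (3 - q)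
          * (betaFn (3 / (2*q)) (1/2)) ^ (q - 1)) ≤ ((4/3) * (11/4)) * (11.34 * 1.85) := by
      refine mul_le_mul hcq (mul_le_mul hX hY hYpos (by norm_num))
        (mul_nonneg hXpos hYpos) (by norm_num)
    rw [hrw]
    calc (1 / (4 * Real.pi ^ 2)) *
        ((2/q) * (1+q) * ((betaFn (1 / (2*q)) (1/2)) ^ (3 - q)
          * (betaFn (3 / (2*q)) (1/2)) ^ (q - 1)))
        ≤ (1 / (4 * Real.pi ^ 2)) * (((4/3) * (11/4)) * (11.34 * 1.85)) :=
          mul_le_mul_of_nonneg_left hB (by positivity)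
      _ < 4 := by
          rw [div_mul_eq_mul_div, one_mul, div_lt_iff₀ (by positivity)]
          nlinarith [hpi]
end

section
/- Suppose F, E : (0,1) → ℝ are differentiable, F(α) → 0 as α → 1⁻, and there is a positive function δ on (0,1) with F'(α) = δ(α)·(1/E)'(α). Assume δ is strictly decreasing, and there is α_crit ∈ (0,1) with (1/E)' > 0 on (0, α_crit) and (1/E)' < 0 on (α_crit, 1). If 0 < α₁ < α_crit < α₂ < 1 and E(α₁) = E(α₂), then F(α₂) > F(α₁), and moreover F(α₂) > 0. -/
open Set Real Filter

/-- The energy comparison argument of Theorem 2_2_tango. If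
F' = δ·(1/E)' with δ positive and strictly decreasing, (1/E)' changes sign from
+ to − at α_crit, F → 0 at 1⁻, and E(α₁) = E(α₂) with α₁ < α_crit < α₂, then
F(α₂) > F(α₁) and F(α₂) > 0. -/
theorem energy_comparison_two_states
    (F E δ g : ℝ → ℝ) (αcrit α₁ α₂ : ℝ)
    (hαc : αcrit ∈ Set.Ioo (0:ℝ) 1)
    (hα₁ : 0 < α₁) (h₁c : α₁ < αcrit) (hc₂ : αcrit < α₂) (hα₂ : α₂ < 1)
    (hδ_pos : ∀ α ∈ Set.Ioo (0:ℝ) 1, 0 < δ α)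
    (hδ_anti : StrictAntiOn δ (Set.Ioo (0:ℝ) 1))
    (hE_ne : ∀ α ∈ Set.Ioo (0:ℝ) 1, E α ≠ 0)
    (hinvE_deriv : ∀ α ∈ Set.Ioo (0:ℝ) 1, HasDerivAt (fun x => 1 / E x) (g α) α)
    (hF_deriv : ∀ α ∈ Set.Ioo (0:ℝ) 1, HasDerivAt F (δ α * g α) α)
    (hg_pos : ∀ α ∈ Set.Ioo 0 αcrit, 0 < g α)
    (hg_neg : ∀ α ∈ Set.Ioo αcrit 1, g α < 0)
    (hF_lim : Filter.Tendsto F (nhdsWithin 1 (Set.Iio 1)) (nhds 0))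
    (hE_eq : E α₁ = E α₂) :
    F α₂ > F α₁ ∧ F α₂ > 0 := by
  obtain ⟨hc0, hc1⟩ := hαc
  have hα₂0 : (0:ℝ) < α₂ := lt_trans hc0 hc₂
  have hα₁1 : α₁ < 1 := lt_trans h₁c hc1
  set H : ℝ → ℝ := fun x => F x - δ αcrit * (1 / E x) with hH
  have hHderiv : ∀ α ∈ Set.Ioo (0:ℝ) 1, HasDerivAt H ((δ α - δ αcrit) * g α) α := by
    intro α hα
    have h := (hF_deriv α hα).sub ((hinvE_deriv α hα).const_mul (δ αcrit))
    rw [show (δ α - δ αcrit) * g α = δ α * g α - δ αcrit * g α by ring]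
    exact h
  have hsub1 : Set.Icc α₁ αcrit ⊆ Set.Ioo (0:ℝ) 1 := fun x hx =>
    ⟨lt_of_lt_of_le hα₁ hx.1, lt_of_le_of_lt hx.2 hc1⟩
  have hsub2 : Set.Icc αcrit α₂ ⊆ Set.Ioo (0:ℝ) 1 := fun x hx =>
    ⟨lt_of_lt_of_le hc0 hx.1, lt_of_le_of_lt hx.2 hα₂⟩
  have hmono1 : StrictMonoOn H (Set.Icc α₁ αcrit) := by
    apply strictMonoOn_of_deriv_pos (convex_Icc _ _)
    · exact fun x hx => (hHderiv x (hsub1 hx)).continuousAt.continuousWithinAt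
    · intro x hx
      rw [interior_Icc] at hx
      have hx01 : x ∈ Set.Ioo (0:ℝ) 1 := hsub1 ⟨le_of_lt hx.1, le_of_lt hx.2⟩
      rw [(hHderiv x hx01).deriv]
      have hδx : δ αcrit < δ x := hδ_anti hx01 ⟨hc0, hc1⟩ hx.2
      have hgx : 0 < g x := hg_pos x ⟨hx01.1, hx.2⟩
      exact mul_pos (sub_pos.2 hδx) hgx
  have hmono2 : StrictMonoOn H (Set.Icc αcrit α₂) := by
    apply strictMonoOn_of_deriv_pos (convex_Icc _ _)
    · exact fun x hx => (hHderiv x (hsub2 hx)).continuousAt.continuousWithinAt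
    · intro x hx
      rw [interior_Icc] at hx
      have hx01 : x ∈ Set.Ioo (0:ℝ) 1 := hsub2 ⟨le_of_lt hx.1, le_of_lt hx.2⟩
      rw [(hHderiv x hx01).deriv]
      have hδx : δ x < δ αcrit := hδ_anti ⟨hc0, hc1⟩ hx01 hx.1
      have hgx : g x < 0 := hg_neg x ⟨hx.1, hx01.2⟩
      exact mul_pos_of_neg_of_neg (sub_neg.2 hδx) hgx
  have hH12 : H α₁ < H α₂ := by
    have h1 : H α₁ < H αcrit := hmono1 ⟨le_refl _, le_of_lt h₁c⟩ ⟨le_of_lt h₁c, le_refl _⟩ h₁c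
    have h2 : H αcrit < H α₂ := hmono2 ⟨le_refl _, le_of_lt hc₂⟩ ⟨le_of_lt hc₂, le_refl _⟩ hc₂
    exact lt_trans h1 h2
  have hF12 : F α₁ < F α₂ := by
    have : F α₁ - δ αcrit * (1 / E α₁) < F α₂ - δ αcrit * (1 / E α₂) := hH12
    rw [hE_eq] at this
    linarith
  have hsub3 : Set.Ico α₂ 1 ⊆ Set.Ioo (0:ℝ) 1 := fun x hx => ⟨lt_of_lt_of_le hα₂0 hx.1, hx.2⟩
  have hanti : StrictAntiOn F (Set.Ico α₂ 1) := by
    apply strictAntiOn_of_deriv_neg (convex_Ico _ _)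
    · exact fun x hx => (hF_deriv x (hsub3 hx)).continuousAt.continuousWithinAt
    · intro x hx
      rw [interior_Ico] at hx
      have hx01 : x ∈ Set.Ioo (0:ℝ) 1 := hsub3 ⟨le_of_lt hx.1, hx.2⟩
      rw [(hF_deriv x hx01).deriv]
      exact mul_neg_of_pos_of_neg (hδ_pos x hx01) (hg_neg x ⟨lt_trans hc₂ hx.1, hx.2⟩)
  set β₀ : ℝ := (α₂ + 1) / 2 with hβ₀
  have hβ₀2 : α₂ < β₀ := by rw [hβ₀]; linarith
  have hβ₀1 : β₀ < 1 := by rw [hβ₀]; linarith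
  have hFβ₀ : 0 ≤ F β₀ := by
    refine le_of_tendsto hF_lim ?_
    filter_upwards [Ioo_mem_nhdsLT_of_mem (⟨hβ₀1, le_refl (1:ℝ)⟩ : (1:ℝ) ∈ Set.Ioc β₀ 1)] with x hx
    exact le_of_lt (hanti ⟨le_of_lt hβ₀2, hβ₀1⟩ ⟨le_of_lt (lt_trans hβ₀2 hx.1), hx.2⟩ hx.1)
  have hFα₂ : 0 < F α₂ :=
    lt_of_le_of_lt hFβ₀ (hanti ⟨le_refl _, hα₂⟩ ⟨le_of_lt hβ₀2, hβ₀1⟩ hβ₀2)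
  exact ⟨hF12, hFα₂⟩
end
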